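/- arXiv:2010.14566 — 7 statements merged into one kernel-verified Lean document; each statement's English description precedes it below -/
import Mathlib

section
/- Let f : {1,…,n} → {1,…,n} be a bijection and, for a state x, let f(x) denote coordinatewise application (f(x)_i = f(x_i)). If π is a stationary distribution of the neutral chain P°, then the measure x ↦ π(f(x)) is also a stationary distribution of P°; consequently, if the neutral chain has a unique stationary distribution π°, then π°(f(x)) = π°(x) for every state x. -/
open Finset

namespace SCT

abbrev Event (N : ℕ) := Finset (Fin N) × (Fin N → Fin N)

/-- The extension `α̃` of the parentage map of a replacement event:
it equals `α` on `R` and the identity off `R`. -/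
def extMap {N : ℕ} (E : Event N) : Fin N → Fin N :=
  fun i => if i ∈ E.1 then E.2 i else i

/-- Transition probabilities of the mutation–selection Markov chain on states
`Fin N → Fin n`, for a replacement rule `p` and mutation probability `u`. -/
noncomputable def transMat (N n : ℕ) (p : Event N → ℝ) (u : ℝ)
    (x y : Fin N → Fin n) : ℝ :=
  ∑ E : Event N, p E *
    (∏ i ∈ E.1, ((1 - u) * (if y i = x (E.2 i) then (1:ℝ) else 0) + u / (n:ℝ))) *
    (∏ i ∈ E.1ᶜ, (if y i = x i then (1:ℝ) else 0))

def IsDist {α : Type*} [Fintype α] (q : α → ℝ) : Prop :=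
  (∀ a, 0 ≤ q a) ∧ ∑ a, q a = 1

def IsStationary {N n : ℕ} (P : (Fin N → Fin n) → (Fin N → Fin n) → ℝ)
    (π : (Fin N → Fin n) → ℝ) : Prop :=
  IsDist π ∧ ∀ y, ∑ x, π x * P x y = π y

/-- Fixation axiom: some site `i` can propagate its lineage through the whole
population via finitely many replacement events of positive probability. -/
def FixationAxiom {N : ℕ} (p : Event N → ℝ) : Prop :=
  ∃ (i : Fin N) (m : ℕ) (E : Fin m → Event N), 1 ≤ m ∧
    (∀ k, 0 < p (E k)) ∧ (∃ k, i ∈ (E k).1) ∧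
    ∀ j, ((List.ofFn (fun k => extMap (E k))).foldr (· ∘ ·) id) j = i

/-- Pairwise identity-by-state probability under the distribution `π`. -/
noncomputable def phi2 {N n : ℕ} (π : (Fin N → Fin n) → ℝ) (i j : Fin N) : ℝ :=
  ∑ x, π x * (if x i = x j then (1:ℝ) else 0)

/-- Triple identity-by-state probability under the distribution `π`. -/
noncomputable def phi3 {N n : ℕ} (π : (Fin N → Fin n) → ℝ) (i j k : Fin N) : ℝ :=
  ∑ x, π x * (if x i = x j ∧ x j = x k then (1:ℝ) else 0)

lemma transMat_comp {N n : ℕ} (p : Event N → ℝ) (u : ℝ) (f : Fin n ≃ Fin n)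
    (x y : Fin N → Fin n) :
    transMat N n p u (fun i => f (x i)) (fun i => f (y i)) = transMat N n p u x y := by
  unfold transMat
  refine Finset.sum_congr rfl fun E _ => ?_
  congr 1
  · congr 1
    refine Finset.prod_congr rfl fun i _ => ?_
    simp [f.apply_eq_iff_eq]
  · refine Finset.prod_congr rfl fun i _ => ?_
    simp [f.apply_eq_iff_eq]

/-- If `π` is a stationary distribution of the neutral chain and `f`
is a bijection of the strategy set, then `x ↦ π (f ∘ x)` is also stationary;
consequently, if the stationary distribution is unique, it is invariant under `f`. -/
theorem stmt0 {N n : ℕ} (hN : 1 ≤ N) (hn : 1 ≤ n)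
    (p : Event N → ℝ) (hp : IsDist p)
    (u : ℝ) (hu0 : 0 < u) (hu1 : u ≤ 1)
    (f : Fin n ≃ Fin n)
    (π : (Fin N → Fin n) → ℝ)
    (hπ : IsStationary (transMat N n p u) π) :
    IsStationary (transMat N n p u) (fun x => π (fun i => f (x i))) ∧
    ((∀ π', IsStationary (transMat N n p u) π' → π' = π) →
      ∀ x : Fin N → Fin n, π (fun i => f (x i)) = π x) := by
  obtain ⟨⟨hpos, hsum⟩, hstat⟩ := hπ
  have e : (Fin N → Fin n) ≃ (Fin N → Fin n) := Equiv.piCongrRight fun _ => f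
  have hstat' : IsStationary (transMat N n p u) (fun x => π (fun i => f (x i))) := by
    refine ⟨⟨fun a => hpos _, ?_⟩, ?_⟩
    · rw [← hsum]
      exact Fintype.sum_equiv (Equiv.piCongrRight fun _ => f) _ _ (fun x => rfl)
    · intro y
      have := hstat (fun i => f (y i))
      calc ∑ x, π (fun i => f (x i)) * transMat N n p u x y
          = ∑ z, π z * transMat N n p u (fun i => f.symm (z i)) y := by
            refine Fintype.sum_equiv (Equiv.piCongrRight fun _ => f) _ _ (fun x => ?_)
            have h1 : (fun i => f.symm ((Equiv.piCongrRight fun _ => f) x i)) = x := by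
              funext i; simp
            have h2 : ((Equiv.piCongrRight fun _ => f) x) = fun i => f (x i) := by
              funext i; simp
            rw [h1, h2]
        _ = ∑ z, π z * transMat N n p u z (fun i => f (y i)) := by
            refine Finset.sum_congr rfl fun z _ => ?_
            congr 1
            have := transMat_comp p u f (fun i => f.symm (z i)) y
            simpa using this.symm
        _ = π (fun i => f (y i)) := hstat _
  refine ⟨hstat', fun huniq x => ?_⟩
  have := huniq _ hstat'
  exact congrFun this x

end SCT
end

section
/- The pairwise identity-by-state probabilities {φ_ij}_{i,j=1}^N are uniquely determined by the conditions: φ_ii = 1 for every i, and, for every i ≠ j, φ_ij = u²·(1/n)·Σ_{(R,α) : |{i,j}∩R| = 2} p°_{(R,α)} + u·(1/n)·Σ_{(R,α) : |{i,j}∩R| = 1} p°_{(R,α)} + 2u(1−u)·(1/n)·Σ_{(R,α) : |{i,j}∩R| = 2} p°_{(R,α)} + Σ_{(R,α)} p°_{(R,α)}·(1−u)^{|{i,j}∩R|}·φ_{α̃(i)α̃(j)}. In particular, φ as defined from π° satisfies these equations, and they have no other solution. -/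
/-!
By stationarity, `φ_ij` is the probability that sites `i ≠ j` share a type after one step of the
chain. Given the event and the current state, the new types are independent, each equal to the
parent's type with probability `1 - u` (replaced site) or `1` (untouched site) and uniform
otherwise; so two sites agree with probability `(1-u)^k · [parents agree] + (1 - (1-u)^k) / n`,
`k` the number of the two sites that are replaced. This is the recurrence.

For uniqueness, the difference `d` of two solutions vanishes on the diagonal and satisfies
`|d i j| ≤ ∑ p_E |d (α̃_E i) (α̃_E j)|`. A maximum of `|d|` is therefore carried along every event
of positive probability, and along the fixation sequence to a diagonal pair, so it is `0`.
-/
open Finset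

namespace SCT

theorem sum_pi_prod_mul_ite_eq {ι α R : Type*} [Fintype ι] [DecidableEq ι] [Fintype α]
    [DecidableEq α] [CommSemiring R] (g : ι → α → R) (hg : ∀ k, ∑ a, g k a = 1)
    {i j : ι} (hij : i ≠ j) :
    ∑ y : ι → α, (∏ k, g k (y k)) * (if y i = y j then 1 else 0) = ∑ c, g i c * g j c := by
  set pin : α → ι → α → R := fun c k a =>
    g k a * if k ∈ ({i, j} : Finset ι) then (if a = c then 1 else 0) else 1
  have hprod : ∀ c (y : ι → α), ∏ k, pin c k (y k)
      = (∏ k, g k (y k)) * ((if y i = c then 1 else 0) * (if y j = c then 1 else 0)) := by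
    intro c y
    rw [prod_mul_distrib, prod_ite_mem, univ_inter, prod_pair hij]
  have hsum : ∀ c k, ∑ a, pin c k a = if k ∈ ({i, j} : Finset ι) then g k c else 1 := by
    intro c k
    split_ifs with hk <;>
      simp only [pin, hk, if_true, if_false, mul_ite, mul_one, mul_zero, sum_ite_eq', mem_univ, hg]
  calc ∑ y : ι → α, (∏ k, g k (y k)) * (if y i = y j then 1 else 0)
      = ∑ c, ∑ y : ι → α, ∏ k, pin c k (y k) := by
        rw [sum_comm]
        refine sum_congr rfl fun y _ => ?_
        simp only [hprod, ← mul_sum, ite_mul, one_mul, zero_mul, sum_ite_eq', mem_univ, if_true,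
          eq_comm]
    _ = ∑ c, g i c * g j c := by
        refine sum_congr rfl fun c _ => ?_
        rw [← Fintype.prod_sum]
        simp only [hsum, prod_ite_mem, univ_inter, prod_pair hij]

-- A replaced site has `t = 1 - u`, an untouched one `t = 1`.
noncomputable def mutKernel (n : ℕ) (t : ℝ) (a c : Fin n) : ℝ :=
  t * (if c = a then 1 else 0) + (1 - t) / n

theorem sum_mutKernel {n : ℕ} [NeZero n] (t : ℝ) (a : Fin n) : ∑ c, mutKernel n t a c = 1 := by
  have : (n : ℝ) ≠ 0 := NeZero.ne _
  simp only [mutKernel, sum_add_distrib, ← mul_sum, sum_ite_eq', mem_univ, if_true, sum_const,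
    card_univ, Fintype.card_fin, nsmul_eq_mul]
  field_simp
  ring

theorem sum_mutKernel_mul_mutKernel {n : ℕ} [NeZero n] (s t : ℝ) (a b : Fin n) :
    ∑ c, mutKernel n s a c * mutKernel n t b c
      = s * t * (if a = b then 1 else 0) + (1 - s * t) / n := by
  have : (n : ℝ) ≠ 0 := NeZero.ne _
  have hδ : ∑ c : Fin n, (if c = a then (1 : ℝ) else 0) * (if c = b then 1 else 0)
      = if a = b then 1 else 0 := by
    simp only [ite_mul, one_mul, zero_mul, sum_ite_eq', mem_univ, if_true]
  simp only [mutKernel, add_mul, mul_add, sum_add_distrib]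
  simp only [mul_assoc, mul_left_comm _ t, ← mul_sum, mul_comm _ ((1 - t) / n), hδ]
  simp only [sum_ite_eq', mem_univ, if_true, sum_const, card_univ, Fintype.card_fin, nsmul_eq_mul]
  field_simp
  ring

theorem transMat_eq_sum_prod_mutKernel (N n : ℕ) (p : Event N → ℝ) (u : ℝ)
    (x y : Fin N → Fin n) :
    transMat N n p u x y
      = ∑ E : Event N, p E *
          ∏ k, mutKernel n (if k ∈ E.1 then 1 - u else 1) (x (extMap E k)) (y k) := by
  refine sum_congr rfl fun E _ => ?_
  rw [mul_assoc, ← prod_mul_prod_compl E.1]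
  congr 2 <;> refine prod_congr rfl fun k hk => ?_
  · simp [mutKernel, extMap, hk]
  · simp [mutKernel, extMap, mem_compl.mp hk]

theorem ite_mul_ite_eq_pow_card {N : ℕ} {i j : Fin N} (hij : i ≠ j) (R : Finset (Fin N))
    (r : ℝ) :
    (if i ∈ R then r else 1) * (if j ∈ R then r else 1)
      = r ^ (({i, j} : Finset (Fin N)) ∩ R).card := by
  rw [← prod_pair hij (f := fun k => if k ∈ R then r else 1), prod_ite_mem, prod_const]

theorem sum_transMat_mul_ite_eq {N n : ℕ} (p : Event N → ℝ) (u : ℝ) (x : Fin N → Fin n)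
    {i j : Fin N} (hij : i ≠ j) :
    ∑ y, transMat N n p u x y * (if y i = y j then 1 else 0)
      = ∑ E : Event N, p E *
          ((1 - u) ^ (({i, j} : Finset (Fin N)) ∩ E.1).card *
              (if x (extMap E i) = x (extMap E j) then 1 else 0)
            + (1 - (1 - u) ^ (({i, j} : Finset (Fin N)) ∩ E.1).card) / n) := by
  have : NeZero n := NeZero.of_pos (x i).pos
  simp only [transMat_eq_sum_prod_mutKernel, sum_mul, mul_assoc]
  rw [sum_comm]
  refine sum_congr rfl fun E _ => ?_
  rw [← mul_sum, sum_pi_prod_mul_ite_eq _ (fun k => sum_mutKernel _ _) hij,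
    sum_mutKernel_mul_mutKernel, ite_mul_ite_eq_pow_card hij]

noncomputable def ibsMap {N : ℕ} (n : ℕ) (p : Event N → ℝ) (u : ℝ) (ψ : Fin N → Fin N → ℝ)
    (i j : Fin N) : ℝ :=
  ∑ E : Event N, p E *
    ((1 - u) ^ (({i, j} : Finset (Fin N)) ∩ E.1).card * ψ (extMap E i) (extMap E j)
      + (1 - (1 - u) ^ (({i, j} : Finset (Fin N)) ∩ E.1).card) / n)

theorem phi2_self {N n : ℕ} {π : (Fin N → Fin n) → ℝ} (hπ : IsDist π) (i : Fin N) :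
    phi2 π i i = 1 := by
  simpa [phi2] using hπ.2

theorem phi2_eq_ibsMap {N n : ℕ} {p : Event N → ℝ} {u : ℝ} {π : (Fin N → Fin n) → ℝ}
    (hπ : IsStationary (transMat N n p u) π) {i j : Fin N} (hij : i ≠ j) :
    phi2 π i j = ibsMap n p u (phi2 π) i j := by
  calc phi2 π i j
      = ∑ y, (∑ x, π x * transMat N n p u x y) * (if y i = y j then 1 else 0) := by
        simp only [phi2, hπ.2]
    _ = ∑ x, π x * ∑ y, transMat N n p u x y * (if y i = y j then 1 else 0) := by
        simp only [sum_mul, mul_sum, mul_assoc]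
        exact sum_comm
    _ = ibsMap n p u (phi2 π) i j := by
        simp only [sum_transMat_mul_ite_eq p u _ hij, ibsMap, phi2, mul_sum]
        rw [sum_comm]
        refine sum_congr rfl fun E _ => ?_
        have hB : (1 - (1 - u) ^ (({i, j} : Finset (Fin N)) ∩ E.1).card) / (n : ℝ)
            = ∑ x, π x * ((1 - (1 - u) ^ (({i, j} : Finset (Fin N)) ∩ E.1).card) / n) := by
          rw [← sum_mul, hπ.1.2, one_mul]
        conv_rhs => rw [hB, ← sum_add_distrib, mul_sum]
        exact sum_congr rfl fun x _ => by ring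

theorem ibsMap_eq {N : ℕ} (n : ℕ) (p : Event N → ℝ) (u : ℝ) (ψ : Fin N → Fin N → ℝ)
    (i j : Fin N) :
    ibsMap n p u ψ i j =
      u^2 * (1/(n:ℝ)) *
        (∑ E ∈ univ.filter
          (fun E : Event N => (({i, j} : Finset (Fin N)) ∩ E.1).card = 2), p E)
      + u * (1/(n:ℝ)) *
        (∑ E ∈ univ.filter
          (fun E : Event N => (({i, j} : Finset (Fin N)) ∩ E.1).card = 1), p E)
      + 2 * u * (1-u) * (1/(n:ℝ)) *
        (∑ E ∈ univ.filter
          (fun E : Event N => (({i, j} : Finset (Fin N)) ∩ E.1).card = 2), p E)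
      + ∑ E : Event N,
          p E * (1-u)^((({i, j} : Finset (Fin N)) ∩ E.1).card) * ψ (extMap E i) (extMap E j) := by
  have hsplit : ∀ E : Event N,
      p E * ((1 - u) ^ (({i, j} : Finset (Fin N)) ∩ E.1).card * ψ (extMap E i) (extMap E j)
        + (1 - (1 - u) ^ (({i, j} : Finset (Fin N)) ∩ E.1).card) / n)
      = (if (({i, j} : Finset (Fin N)) ∩ E.1).card = 2 then
            (u^2 * (1/(n:ℝ)) + 2 * u * (1-u) * (1/(n:ℝ))) * p E else 0)
        + (if (({i, j} : Finset (Fin N)) ∩ E.1).card = 1 then u * (1/(n:ℝ)) * p E else 0)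
        + p E * (1-u)^((({i, j} : Finset (Fin N)) ∩ E.1).card) * ψ (extMap E i) (extMap E j) := by
    intro E
    have hk : (({i, j} : Finset (Fin N)) ∩ E.1).card ≤ 2 :=
      (card_le_card inter_subset_left).trans card_le_two
    interval_cases (({i, j} : Finset (Fin N)) ∩ E.1).card <;>
      simp only [pow_zero, pow_one, one_mul, mul_one, sub_self, sub_sub_cancel, zero_div, add_zero,
        zero_add, one_div, OfNat.zero_ne_ofNat, OfNat.one_ne_ofNat, OfNat.ofNat_ne_one, zero_ne_one,
        ↓reduceIte] <;>
      ring
  simp only [ibsMap, hsplit, sum_add_distrib, ← sum_filter, ← mul_sum]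
  ring

theorem foldr_comp_map_rel {α : Type*} (r : α → α → Prop) (L : List (α → α))
    (hL : ∀ f ∈ L, ∀ a b, r a b → r (f a) (f b)) {a b : α} (hab : r a b) :
    r (L.foldr (· ∘ ·) id a) (L.foldr (· ∘ ·) id b) := by
  induction L with
  | nil => exact hab
  | cons f L ih =>
    exact hL f List.mem_cons_self _ _ (ih fun g hg => hL g (List.mem_cons_of_mem f hg))

theorem apply_eq_max_of_le_sum_mul {ι X : Type*} [Fintype ι] {w : ι → ℝ} (hw : IsDist w)
    {f : X → ℝ} {T : ι → X → X} {D : ℝ} (hD : ∀ x, f x ≤ D) {x : X} (hx : f x = D)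
    (hsub : f x ≤ ∑ e, w e * f (T e x)) {e : ι} (he : 0 < w e) : f (T e x) = D := by
  refine le_antisymm (hD _) (not_lt.mp fun hlt => ?_)
  have : ∑ e', w e' * f (T e' x) < ∑ e', w e' * D :=
    sum_lt_sum (fun e' _ => mul_le_mul_of_nonneg_left (hD _) (hw.1 e'))
      ⟨e, mem_univ _, mul_lt_mul_of_pos_left hlt he⟩
  rw [← sum_mul, hw.2, one_mul] at this
  linarith

theorem eq_zero_of_abs_le_sum {N : ℕ} {p : Event N → ℝ} (hp : IsDist p)
    (hfix : FixationAxiom p) {d : Fin N → Fin N → ℝ} (hdiag : ∀ i, d i i = 0)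
    (hle : ∀ i j, |d i j| ≤ ∑ E : Event N, p E * |d (extMap E i) (extMap E j)|) : d = 0 := by
  obtain ⟨i₀, m, E, -, hpos, -, hfixed⟩ := hfix
  have : Nonempty (Fin N) := ⟨i₀⟩
  obtain ⟨⟨a, b⟩, hmax⟩ := Finite.exists_max fun q : Fin N × Fin N => |d q.1 q.2|
  have hpreserve : ∀ f ∈ List.ofFn (fun k => extMap (E k)),
      ∀ i j, |d i j| = |d a b| → |d (f i) (f j)| = |d a b| := by
    intro f hf i j hij
    obtain ⟨k, rfl⟩ := List.mem_ofFn.mp hf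
    exact apply_eq_max_of_le_sum_mul (f := fun q : Fin N × Fin N => |d q.1 q.2|)
      (T := fun E q => (extMap E q.1, extMap E q.2)) (x := (i, j)) hp hmax hij (hle i j) (hpos k)
  have hmax_zero : |d a b| = 0 := by
    have := foldr_comp_map_rel _ _ hpreserve (rfl : |d a b| = |d a b|)
    rwa [hfixed, hfixed, hdiag, abs_zero, eq_comm] at this
  funext i j
  exact abs_nonpos_iff.mp (hmax_zero ▸ hmax (i, j))

theorem abs_ibsMap_sub_le {N : ℕ} (n : ℕ) {p : Event N → ℝ} (hp : ∀ E, 0 ≤ p E) {u : ℝ}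
    (hu0 : 0 ≤ u) (hu1 : u ≤ 1) (ψ ψ' : Fin N → Fin N → ℝ) (i j : Fin N) :
    |ibsMap n p u ψ i j - ibsMap n p u ψ' i j|
      ≤ ∑ E : Event N, p E * |ψ (extMap E i) (extMap E j) - ψ' (extMap E i) (extMap E j)| := by
  rw [ibsMap, ibsMap, ← sum_sub_distrib]
  refine (abs_sum_le_sum_abs _ _).trans (sum_le_sum fun E _ => ?_)
  have hpow_nonneg : 0 ≤ (1 - u) ^ (({i, j} : Finset (Fin N)) ∩ E.1).card :=
    pow_nonneg (by linarith) _
  have hpow_le_one : (1 - u) ^ (({i, j} : Finset (Fin N)) ∩ E.1).card ≤ 1 :=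
    pow_le_one₀ (by linarith) (by linarith)
  rw [← mul_sub, add_sub_add_right_eq_sub, ← mul_sub, abs_mul, abs_mul, abs_of_nonneg (hp E),
    abs_of_nonneg hpow_nonneg]
  exact mul_le_mul_of_nonneg_left (mul_le_of_le_one_left (abs_nonneg _) hpow_le_one) (hp E)

theorem eq_of_eq_ibsMap {N : ℕ} (n : ℕ) {p : Event N → ℝ} (hp : IsDist p)
    (hfix : FixationAxiom p) {u : ℝ} (hu0 : 0 ≤ u) (hu1 : u ≤ 1) {ψ ψ' : Fin N → Fin N → ℝ}
    (hψ : ∀ i, ψ i i = 1) (hψ' : ∀ i, ψ' i i = 1)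
    (hrec : ∀ i j, i ≠ j → ψ i j = ibsMap n p u ψ i j)
    (hrec' : ∀ i j, i ≠ j → ψ' i j = ibsMap n p u ψ' i j) : ψ = ψ' := by
  refine sub_eq_zero.mp (eq_zero_of_abs_le_sum hp hfix (fun i => by simp [hψ, hψ']) fun i j => ?_)
  rcases eq_or_ne i j with rfl | hij
  · simp [hψ, hψ']
  · simp only [Pi.sub_apply]
    rw [hrec i j hij, hrec' i j hij]
    exact abs_ibsMap_sub_le n hp.1 hu0 hu1 ψ ψ' i j

theorem stmt1_general {N n : ℕ}
    (p : Event N → ℝ) (hp : IsDist p) (hfix : FixationAxiom p)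
    (u : ℝ) (hu0 : 0 < u) (hu1 : u ≤ 1)
    (π : (Fin N → Fin n) → ℝ)
    (hπ : IsStationary (transMat N n p u) π) :
    ∀ ψ : Fin N → Fin N → ℝ,
      ((∀ i, ψ i i = 1) ∧
        (∀ i j : Fin N, i ≠ j →
          ψ i j =
            u^2 * (1/(n:ℝ)) *
              (∑ E ∈ univ.filter
                (fun E : Event N => (({i, j} : Finset (Fin N)) ∩ E.1).card = 2), p E)
            + u * (1/(n:ℝ)) *
              (∑ E ∈ univ.filter
                (fun E : Event N => (({i, j} : Finset (Fin N)) ∩ E.1).card = 1), p E)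
            + 2 * u * (1-u) * (1/(n:ℝ)) *
              (∑ E ∈ univ.filter
                (fun E : Event N => (({i, j} : Finset (Fin N)) ∩ E.1).card = 2), p E)
            + ∑ E : Event N,
                p E * (1-u)^((({i, j} : Finset (Fin N)) ∩ E.1).card) *
                  ψ (extMap E i) (extMap E j)))
      ↔ ψ = fun i j => phi2 π i j := by
  intro ψ
  simp only [← ibsMap_eq]
  have hφ_rec : ∀ i j, i ≠ j → phi2 π i j = ibsMap n p u (phi2 π) i j :=
    fun _ _ hij => phi2_eq_ibsMap hπ hij
  constructor
  · rintro ⟨hdiag, hrec⟩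
    exact eq_of_eq_ibsMap n hp hfix hu0.le hu1 hdiag (phi2_self hπ.1) hrec hφ_rec
  · rintro rfl
    exact ⟨phi2_self hπ.1, hφ_rec⟩

/-- The pairwise identity-by-state probabilities under the unique
neutral stationary distribution are the unique solution of the given recurrence. -/
theorem stmt1 {N n : ℕ} (hN : 1 ≤ N) (hn : 1 ≤ n)
    (p : Event N → ℝ) (hp : IsDist p) (hfix : FixationAxiom p)
    (u : ℝ) (hu0 : 0 < u) (hu1 : u ≤ 1)
    (π : (Fin N → Fin n) → ℝ)
    (hπ : IsStationary (transMat N n p u) π)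
    (huniq : ∀ π', IsStationary (transMat N n p u) π' → π' = π) :
    ∀ ψ : Fin N → Fin N → ℝ,
      ((∀ i, ψ i i = 1) ∧
        (∀ i j : Fin N, i ≠ j →
          ψ i j =
            u^2 * (1/(n:ℝ)) *
              (∑ E ∈ univ.filter
                (fun E : Event N => (({i, j} : Finset (Fin N)) ∩ E.1).card = 2), p E)
            + u * (1/(n:ℝ)) *
              (∑ E ∈ univ.filter
                (fun E : Event N => (({i, j} : Finset (Fin N)) ∩ E.1).card = 1), p E)
            + 2 * u * (1-u) * (1/(n:ℝ)) *
              (∑ E ∈ univ.filter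
                (fun E : Event N => (({i, j} : Finset (Fin N)) ∩ E.1).card = 2), p E)
            + ∑ E : Event N,
                p E * (1-u)^((({i, j} : Finset (Fin N)) ∩ E.1).card) *
                  ψ (extMap E i) (extMap E j)))
      ↔ ψ = fun i j => phi2 π i j :=
  stmt1_general p hp hfix u hu0 hu1 π hπ

end SCT
end

section
/- For pairwise distinct sites i, j, k, the triple identity-by-state probability satisfies the recurrence φ_ijk = u³·(1/n²)·S₃ + u²·(1/n²)·S₂ + 3u²(1−u)·(1/n²)·S₃ + u·(1/n)·[ φ_jk·Σ_{(R,α) : {i,j,k}∩R = {i}} p°_{(R,α)} + φ_ik·Σ_{(R,α) : {i,j,k}∩R = {j}} p°_{(R,α)} + φ_ij·Σ_{(R,α) : {i,j,k}∩R = {k}} p°_{(R,α)} ] + u(1−u)·(1/n)·Σ_{(R,α) : {i,j,k}∩R = {j,k}} p°_{(R,α)}·(φ_{iα(j)} + φ_{iα(k)}) + u(1−u)·(1/n)·Σ_{(R,α) : {i,j,k}∩R = {i,k}} p°_{(R,α)}·(φ_{α(i)j} + φ_{jα(k)}) + u(1−u)·(1/n)·Σ_{(R,α) : {i,j,k}∩R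 = {i,j}} p°_{(R,α)}·(φ_{α(i)k} + φ_{α(j)k}) + u(1−u)²·(1/n)·Σ_{(R,α) : |{i,j,k}∩R| = 3} p°_{(R,α)}·(φ_{α(i)α(j)} + φ_{α(i)α(k)} + φ_{α(j)α(k)}) + Σ_{(R,α)} p°_{(R,α)}·(1−u)^{|{i,j,k}∩R|}·φ_{α̃(i)α̃(j)α̃(k)}, where S₃ := Σ_{(R,α) : |{i,j,k}∩R| = 3} p°_{(R,α)} and S₂ := Σ_{(R,α) : |{i,j,k}∩R| = 2} p°_{(R,α)}; moreover, together with the pairwise probabilities {φ_ij}, these equations uniquely determine {φ_ijk}_{i,j,k=1}^N. -/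
/-
Given the replacement event `E` and the parent state `x`, the offspring types at the sites are
independent: site `l` copies `x (α̃ l)` with probability `1 - u` (or `1` if `l ∉ R`) and otherwise
draws a uniform type. Hence the probability that three distinct sites agree after one step is a
cubic polynomial in these weights whose coefficients are the identity-by-state probabilities of the
parents `α̃ i`, `α̃ j`, `α̃ k`; averaging over the stationary distribution gives the recurrence.

For uniqueness, the difference `δ` of two solutions vanishes on triples with a repeated site and
satisfies `δ i j k = ∑ E, p E * (1 - u) ^ |{i, j, k} ∩ R| * δ (α̃ i) (α̃ j) (α̃ k)`. By the fixation
axiom some event of positive probability replaces one of two given distinct sites, so these weights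
sum to less than one, and a maximum principle forces `δ = 0`.
-/

open Finset

namespace SCT

/-- Right-hand side of the recurrence for the triple identity-by-state
probabilities of three pairwise-distinct sites `i`, `j`, `k`. -/
noncomputable def tripleRHS {N : ℕ} (n : ℕ) (p : Event N → ℝ) (u : ℝ)
    (φ2 : Fin N → Fin N → ℝ) (φ3 : Fin N → Fin N → Fin N → ℝ)
    (i j k : Fin N) : ℝ :=
  u^3 * (1/(n:ℝ)^2) *
    (∑ E ∈ univ.filter
      (fun E : Event N => (({i, j, k} : Finset (Fin N)) ∩ E.1).card = 3), p E)
  + u^2 * (1/(n:ℝ)^2) *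
    (∑ E ∈ univ.filter
      (fun E : Event N => (({i, j, k} : Finset (Fin N)) ∩ E.1).card = 2), p E)
  + 3 * u^2 * (1-u) * (1/(n:ℝ)^2) *
    (∑ E ∈ univ.filter
      (fun E : Event N => (({i, j, k} : Finset (Fin N)) ∩ E.1).card = 3), p E)
  + u * (1/(n:ℝ)) *
      (φ2 j k * (∑ E ∈ univ.filter
          (fun E : Event N => ({i, j, k} : Finset (Fin N)) ∩ E.1 = {i}), p E)
        + φ2 i k * (∑ E ∈ univ.filter
          (fun E : Event N => ({i, j, k} : Finset (Fin N)) ∩ E.1 = {j}), p E)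
        + φ2 i j * (∑ E ∈ univ.filter
          (fun E : Event N => ({i, j, k} : Finset (Fin N)) ∩ E.1 = {k}), p E))
  + u * (1-u) * (1/(n:ℝ)) *
      (∑ E ∈ univ.filter
        (fun E : Event N => ({i, j, k} : Finset (Fin N)) ∩ E.1 = {j, k}),
          p E * (φ2 i (E.2 j) + φ2 i (E.2 k)))
  + u * (1-u) * (1/(n:ℝ)) *
      (∑ E ∈ univ.filter
        (fun E : Event N => ({i, j, k} : Finset (Fin N)) ∩ E.1 = {i, k}),
          p E * (φ2 (E.2 i) j + φ2 j (E.2 k)))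
  + u * (1-u) * (1/(n:ℝ)) *
      (∑ E ∈ univ.filter
        (fun E : Event N => ({i, j, k} : Finset (Fin N)) ∩ E.1 = {i, j}),
          p E * (φ2 (E.2 i) k + φ2 (E.2 j) k))
  + u * (1-u)^2 * (1/(n:ℝ)) *
      (∑ E ∈ univ.filter
        (fun E : Event N => (({i, j, k} : Finset (Fin N)) ∩ E.1).card = 3),
          p E * (φ2 (E.2 i) (E.2 j) + φ2 (E.2 i) (E.2 k) + φ2 (E.2 j) (E.2 k)))
  + ∑ E : Event N,
      p E * (1-u)^((({i, j, k} : Finset (Fin N)) ∩ E.1).card) *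
        φ3 (extMap E i) (extMap E j) (extMap E k)

section

variable {ι κ : Type*} [Fintype κ]

theorem sum_prod_mul_prod_eq_prod_sum [Fintype ι] [DecidableEq ι] (f g : ι → κ → ℝ)
    (T : Finset ι) (hf : ∀ l ∉ T, ∑ w, f l w = 1) :
    ∑ y : ι → κ, (∏ l, f l (y l)) * ∏ l ∈ T, g l (y l) = ∏ l ∈ T, ∑ w, f l w * g l w := by
  have hrow : ∀ l, ∑ w, f l w * (if l ∈ T then g l w else 1)
      = if l ∈ T then ∑ w, f l w * g l w else 1 := by
    intro l
    split_ifs with hl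
    · rfl
    · simpa using hf l hl
  calc ∑ y : ι → κ, (∏ l, f l (y l)) * ∏ l ∈ T, g l (y l)
      = ∑ y : ι → κ, ∏ l, f l (y l) * (if l ∈ T then g l (y l) else 1) := by
        simp only [prod_mul_distrib, prod_ite_mem, univ_inter]
    _ = ∏ l, ∑ w, f l w * (if l ∈ T then g l w else 1) :=
        (Fintype.prod_sum fun l w => f l w * (if l ∈ T then g l w else 1)).symm
    _ = ∏ l ∈ T, ∑ w, f l w * g l w := by
        simp only [hrow, prod_ite_mem, univ_inter]

theorem sum_ite_eq_mul_ite_eq [DecidableEq κ] (a b : κ) :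
    ∑ v, (if a = v then (1:ℝ) else 0) * (if b = v then 1 else 0) = if a = b then 1 else 0 := by
  simp

theorem sum_ite_eq_mul_ite_eq_mul_ite_eq [DecidableEq κ] (a b c : κ) :
    ∑ v, (if a = v then (1:ℝ) else 0) * (if b = v then 1 else 0) * (if c = v then 1 else 0)
      = if a = b ∧ b = c then 1 else 0 := by
  simp only [ite_mul, one_mul, zero_mul, sum_ite_eq, mem_univ, if_true]
  by_cases hab : a = b <;> simp [hab, eq_comm]

theorem sum_affine_ite_eq_mul_three [DecidableEq κ] (a₁ a₂ a₃ : κ)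
    (b₁ b₂ b₃ c₁ c₂ c₃ : ℝ) :
    ∑ v, (b₁ * (if a₁ = v then 1 else 0) + c₁) * (b₂ * (if a₂ = v then 1 else 0) + c₂) *
        (b₃ * (if a₃ = v then 1 else 0) + c₃)
      = b₁ * b₂ * b₃ * (if a₁ = a₂ ∧ a₂ = a₃ then 1 else 0)
        + b₁ * b₂ * c₃ * (if a₁ = a₂ then 1 else 0)
        + b₁ * c₂ * b₃ * (if a₁ = a₃ then 1 else 0)
        + c₁ * b₂ * b₃ * (if a₂ = a₃ then 1 else 0)
        + (b₁ * c₂ * c₃ + c₁ * b₂ * c₃ + c₁ * c₂ * b₃ + Fintype.card κ * (c₁ * c₂ * c₃)) := by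
  set e : κ → κ → ℝ := fun a v => if a = v then 1 else 0 with he
  have hexpand : ∀ v, (b₁ * e a₁ v + c₁) * (b₂ * e a₂ v + c₂) * (b₃ * e a₃ v + c₃)
      = b₁ * b₂ * b₃ * (e a₁ v * e a₂ v * e a₃ v) + b₁ * b₂ * c₃ * (e a₁ v * e a₂ v)
        + b₁ * c₂ * b₃ * (e a₁ v * e a₃ v) + c₁ * b₂ * b₃ * (e a₂ v * e a₃ v)
        + (b₁ * c₂ * c₃ * e a₁ v + c₁ * b₂ * c₃ * e a₂ v + c₁ * c₂ * b₃ * e a₃ v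
          + c₁ * c₂ * c₃) := fun v => by ring
  refine (sum_congr rfl fun v _ => hexpand v).trans ?_
  simp only [sum_add_distrib, ← mul_sum, he, sum_ite_eq, mem_univ, if_true, sum_ite_eq_mul_ite_eq,
    sum_ite_eq_mul_ite_eq_mul_ite_eq, sum_const, card_univ, nsmul_eq_mul]
  ring

end

variable {N n : ℕ}

theorem IsStationary.sum_mul_eq {P : (Fin N → Fin n) → (Fin N → Fin n) → ℝ}
    {π : (Fin N → Fin n) → ℝ} (hπ : IsStationary P π) (f : (Fin N → Fin n) → ℝ) :
    ∑ y, π y * f y = ∑ x, π x * ∑ y, P x y * f y := by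
  conv_lhs => enter [2, y]; rw [← hπ.2 y]
  simp only [sum_mul, mul_sum, mul_assoc]
  exact sum_comm

noncomputable def inheritWeight (u : ℝ) (E : Event N) (l : Fin N) : ℝ :=
  if l ∈ E.1 then 1 - u else 1

noncomputable def mutationWeight (n : ℕ) (u : ℝ) (E : Event N) (l : Fin N) : ℝ :=
  if l ∈ E.1 then u / n else 0

noncomputable def offspringProb (n : ℕ) (u : ℝ) (E : Event N) (x : Fin N → Fin n) (l : Fin N)
    (w : Fin n) : ℝ :=
  inheritWeight u E l * (if x (extMap E l) = w then 1 else 0) + mutationWeight n u E l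

theorem transMat_eq_sum_prod_offspringProb (p : Event N → ℝ) (u : ℝ) (x y : Fin N → Fin n) :
    transMat N n p u x y = ∑ E, p E * ∏ l, offspringProb n u E x l (y l) := by
  refine sum_congr rfl fun E _ => ?_
  rw [mul_assoc, ← prod_mul_prod_compl E.1]
  congr 2 <;> refine prod_congr rfl fun l hl => ?_
  · simp [offspringProb, inheritWeight, mutationWeight, extMap, hl, eq_comm]
  · simp [offspringProb, inheritWeight, mutationWeight, extMap, mem_compl.mp hl, eq_comm]

theorem sum_offspringProb (hn : n ≠ 0) (u : ℝ) (E : Event N) (x : Fin N → Fin n) (l : Fin N) :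
    ∑ w, offspringProb n u E x l w = 1 := by
  by_cases hl : l ∈ E.1 <;>
    simp [offspringProb, inheritWeight, mutationWeight, hl, sum_add_distrib, hn, mul_div_cancel₀]

theorem sum_transMat_mul_ite_eq_and_eq (hn : n ≠ 0) (p : Event N → ℝ) (u : ℝ)
    (x : Fin N → Fin n) {i j k : Fin N} (hij : i ≠ j) (hik : i ≠ k) (hjk : j ≠ k) :
    ∑ y, transMat N n p u x y * (if y i = y j ∧ y j = y k then 1 else 0)
      = ∑ E, p E * ∑ v, offspringProb n u E x i v * offspringProb n u E x j v *
          offspringProb n u E x k v := by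
  have hprod : ∀ f : Fin N → ℝ, ∏ l ∈ ({i, j, k} : Finset (Fin N)), f l = f i * f j * f k := by
    intro f
    rw [prod_insert (by simp [hij, hik]), prod_pair hjk, mul_assoc]
  simp only [transMat_eq_sum_prod_offspringProb, sum_mul]
  rw [sum_comm]
  refine sum_congr rfl fun E _ => ?_
  conv_lhs => enter [2, y]; rw [mul_assoc]
  rw [← mul_sum]
  congr 1
  calc ∑ y : Fin N → Fin n, (∏ l, offspringProb n u E x l (y l)) *
        (if y i = y j ∧ y j = y k then 1 else 0)
      = ∑ v, ∑ y : Fin N → Fin n, (∏ l, offspringProb n u E x l (y l)) *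
          ∏ l ∈ ({i, j, k} : Finset (Fin N)), (if y l = v then 1 else 0) := by
        simp only [hprod, ← sum_ite_eq_mul_ite_eq_mul_ite_eq, mul_sum]
        exact sum_comm
    _ = ∑ v, offspringProb n u E x i v * offspringProb n u E x j v *
          offspringProb n u E x k v := by
        refine sum_congr rfl fun v _ => ?_
        rw [sum_prod_mul_prod_eq_prod_sum (offspringProb n u E x)
          (fun _ w => if w = v then 1 else 0) _ fun l _ => sum_offspringProb hn u E x l, hprod]
        simp

/-- The probability that the distinct sites `i`, `j`, `k` carry a common type after the event `E`,
when the parent state is drawn from a distribution whose identity-by-state probabilities are `φ2`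
and `φ3`; the terms are grouped by which offspring kept their parent's type. -/
noncomputable def tripleEventTerm (n : ℕ) (u : ℝ) (φ2 : Fin N → Fin N → ℝ)
    (φ3 : Fin N → Fin N → Fin N → ℝ) (E : Event N) (i j k : Fin N) : ℝ :=
  let B := inheritWeight u E
  let C := mutationWeight n u E
  let a := extMap E
  B i * B j * B k * φ3 (a i) (a j) (a k) + B i * B j * C k * φ2 (a i) (a j)
    + B i * C j * B k * φ2 (a i) (a k) + C i * B j * B k * φ2 (a j) (a k)
    + (B i * C j * C k + C i * B j * C k + C i * C j * B k + n * (C i * C j * C k))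

theorem phi3_eq_sum_tripleEventTerm (hn : n ≠ 0) {p : Event N → ℝ} {u : ℝ}
    {π : (Fin N → Fin n) → ℝ} (hπ : IsStationary (transMat N n p u) π)
    {i j k : Fin N} (hij : i ≠ j) (hik : i ≠ k) (hjk : j ≠ k) :
    phi3 π i j k = ∑ E, p E * tripleEventTerm n u (phi2 π) (phi3 π) E i j k := by
  rw [phi3, hπ.sum_mul_eq]
  simp only [sum_transMat_mul_ite_eq_and_eq hn p u _ hij hik hjk, offspringProb,
    sum_affine_ite_eq_mul_three, Fintype.card_fin, mul_sum]
  rw [sum_comm]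
  refine sum_congr rfl fun E _ => ?_
  simp only [tripleEventTerm, phi2, phi3, mul_add, sum_add_distrib, mul_left_comm (π _),
    ← mul_sum, ← sum_mul, hπ.1.2, one_mul]

theorem inter_eq_iff_forall_mem_iff {α : Type*} [DecidableEq α] {T R S : Finset α} :
    T ∩ R = S ↔ S ⊆ T ∧ ∀ l ∈ T, (l ∈ R ↔ l ∈ S) := by
  constructor
  · rintro rfl
    exact ⟨inter_subset_left, fun l hl => by simp [hl]⟩
  · rintro ⟨hST, h⟩
    ext l
    by_cases hl : l ∈ T
    · simp [hl, h l hl]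
    · simp only [mem_inter, hl, false_and, false_iff]
      exact fun hS => hl (hST hS)

theorem card_triple_inter {α : Type*} [DecidableEq α] {i j k : α} (hij : i ≠ j) (hik : i ≠ k)
    (hjk : j ≠ k) (R : Finset α) :
    (({i, j, k} : Finset α) ∩ R).card
      = (if i ∈ R then 1 else 0) + (if j ∈ R then 1 else 0) + (if k ∈ R then 1 else 0) := by
  rw [← filter_mem_eq_inter, card_filter, sum_insert (by simp [hij, hik]), sum_pair hjk, add_assoc]

theorem sum_tripleEventTerm_eq_tripleRHS (hn : n ≠ 0) (p : Event N → ℝ) (u : ℝ)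
    (φ2 : Fin N → Fin N → ℝ) (φ3 : Fin N → Fin N → Fin N → ℝ)
    {i j k : Fin N} (hij : i ≠ j) (hik : i ≠ k) (hjk : j ≠ k) :
    ∑ E, p E * tripleEventTerm n u φ2 φ3 E i j k = tripleRHS n p u φ2 φ3 i j k := by
  unfold tripleRHS
  simp only [sum_filter, inter_eq_iff_forall_mem_iff, card_triple_inter hij hik hjk, mul_sum,
    ← sum_add_distrib]
  refine sum_congr rfl fun E _ => ?_
  by_cases hi : i ∈ E.1 <;> by_cases hj : j ∈ E.1 <;> by_cases hk : k ∈ E.1 <;>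
    simp [tripleEventTerm, inheritWeight, mutationWeight, extMap, hi, hj, hk, hij, hik, hjk,
      hij.symm, hik.symm, hjk.symm, insert_subset_iff] <;> field_simp <;> ring

theorem phi3_self_left (π : (Fin N → Fin n) → ℝ) (a b : Fin N) : phi3 π a a b = phi2 π a b := by
  simp [phi3, phi2]

theorem phi3_self_outer (π : (Fin N → Fin n) → ℝ) (a b : Fin N) :
    phi3 π a b a = phi2 π a b := by
  simp [phi3, phi2, and_iff_left_of_imp Eq.symm]

theorem phi3_self_right (π : (Fin N → Fin n) → ℝ) (a b : Fin N) :
    phi3 π a b b = phi2 π a b := by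
  simp [phi3, phi2]

theorem tripleRHS_sub_tripleRHS (p : Event N → ℝ) (u : ℝ) (φ2 : Fin N → Fin N → ℝ)
    (ψ χ : Fin N → Fin N → Fin N → ℝ) (i j k : Fin N) :
    tripleRHS n p u φ2 ψ i j k - tripleRHS n p u φ2 χ i j k
      = ∑ E, p E * (1 - u) ^ (({i, j, k} : Finset (Fin N)) ∩ E.1).card *
          (ψ (extMap E i) (extMap E j) (extMap E k)
            - χ (extMap E i) (extMap E j) (extMap E k)) := by
  simp only [tripleRHS, mul_sub, sum_sub_distrib]
  ring

/-- Maximum principle: evaluate the averaging equation at a point where `|δ|` is maximal. -/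
theorem eq_zero_of_forall_eq_zero_or_eq_sum_mul {X ι : Type*} [Finite X] [Fintype ι]
    (δ : X → ℝ) (w : X → ι → ℝ) (T : X → ι → X) (hw : ∀ x e, 0 ≤ w x e)
    (h : ∀ x, δ x = 0 ∨ (∑ e, w x e < 1 ∧ δ x = ∑ e, w x e * δ (T x e))) : δ = 0 := by
  funext x₀
  have : Nonempty X := ⟨x₀⟩
  obtain ⟨m, hm⟩ := Finite.exists_max fun x => |δ x|
  suffices δ m = 0 from abs_nonpos_iff.mp (by simpa [this] using hm x₀)
  rcases h m with h0 | ⟨hlt, heq⟩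
  · exact h0
  have hle : |δ m| ≤ (∑ e, w m e) * |δ m| :=
    calc |δ m| ≤ ∑ e, |w m e * δ (T m e)| := heq ▸ abs_sum_le_sum_abs _ _
      _ ≤ ∑ e, w m e * |δ m| := sum_le_sum fun e _ => by
          rw [abs_mul, abs_of_nonneg (hw m e)]
          exact mul_le_mul_of_nonneg_left (hm _) (hw m e)
      _ = (∑ e, w m e) * |δ m| := (sum_mul _ _ _).symm
  exact abs_eq_zero.mp (by nlinarith [abs_nonneg (δ m)])

theorem foldr_comp_apply_eq_self {α : Type*} (c : α) (L : List (α → α))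
    (h : ∀ f ∈ L, f c = c) : L.foldr (· ∘ ·) id c = c := by
  induction L with
  | nil => rfl
  | cons f L ih =>
    simp only [List.foldr_cons, Function.comp_apply, List.forall_mem_cons] at h ⊢
    rw [ih h.2, h.1]

theorem FixationAxiom.exists_pos_mem {p : Event N → ℝ} (hfix : FixationAxiom p) {a b : Fin N}
    (hab : a ≠ b) : ∃ E, 0 < p E ∧ (a ∈ E.1 ∨ b ∈ E.1) := by
  obtain ⟨i₀, m, Ev, -, hpos, -, hcomp⟩ := hfix
  by_contra! h
  have hfixed : ∀ c, (∀ t, c ∉ (Ev t).1) → c = i₀ := fun c hc => by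
    rw [← hcomp c, foldr_comp_apply_eq_self]
    simp only [List.mem_ofFn, forall_exists_index, forall_apply_eq_imp_iff]
    exact fun t => by simp [extMap, hc t]
  exact hab ((hfixed a fun t => (h _ (hpos t)).1).trans
    (hfixed b fun t => (h _ (hpos t)).2).symm)

theorem sum_mul_pow_card_inter_lt_one {p : Event N → ℝ} (hp : IsDist p)
    (hfix : FixationAxiom p) {u : ℝ} (hu0 : 0 < u) (hu1 : u ≤ 1) {S : Finset (Fin N)}
    {a b : Fin N} (ha : a ∈ S) (hb : b ∈ S) (hab : a ≠ b) : ∑ E, p E * (1 - u) ^ (S ∩ E.1).card < 1 := by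
  obtain ⟨E₀, hE₀, hmem⟩ := hfix.exists_pos_mem hab
  have hcard : (S ∩ E₀.1).card ≠ 0 := by
    rw [card_ne_zero]
    rcases hmem with h | h
    exacts [⟨a, mem_inter.mpr ⟨ha, h⟩⟩, ⟨b, mem_inter.mpr ⟨hb, h⟩⟩]
  calc ∑ E, p E * (1 - u) ^ (S ∩ E.1).card
      < ∑ E, p E := sum_lt_sum
        (fun E _ => mul_le_of_le_one_right (hp.1 E) (pow_le_one₀ (by linarith) (by linarith)))
        ⟨E₀, mem_univ _,
          mul_lt_of_lt_one_right hE₀ (pow_lt_one₀ (by linarith) (by linarith) hcard)⟩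
    _ = 1 := hp.2

theorem eq_of_eq_tripleRHS {p : Event N → ℝ} (hp : IsDist p) (hfix : FixationAxiom p) {u : ℝ}
    (hu0 : 0 < u) (hu1 : u ≤ 1) (φ2 : Fin N → Fin N → ℝ) {ψ χ : Fin N → Fin N → Fin N → ℝ}
    (hdiag : ∀ i j k, (i = j ∨ i = k ∨ j = k) → ψ i j k = χ i j k)
    (hψ : ∀ i j k, i ≠ j → i ≠ k → j ≠ k → ψ i j k = tripleRHS n p u φ2 ψ i j k)
    (hχ : ∀ i j k, i ≠ j → i ≠ k → j ≠ k → χ i j k = tripleRHS n p u φ2 χ i j k) :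
    ψ = χ := by
  let δ : Fin N × Fin N × Fin N → ℝ := fun t => ψ t.1 t.2.1 t.2.2 - χ t.1 t.2.1 t.2.2
  have hδ : δ = 0 := by
    refine eq_zero_of_forall_eq_zero_or_eq_sum_mul δ
      (fun t E => p E * (1 - u) ^ (({t.1, t.2.1, t.2.2} : Finset (Fin N)) ∩ E.1).card)
      (fun t E => (extMap E t.1, extMap E t.2.1, extMap E t.2.2))
      (fun _ E => mul_nonneg (hp.1 E) (pow_nonneg (by linarith) _)) fun ⟨i, j, k⟩ => ?_
    by_cases hdeg : i = j ∨ i = k ∨ j = k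
    · exact .inl (sub_eq_zero.mpr (hdiag i j k hdeg))
    simp only [not_or] at hdeg
    obtain ⟨hij, hik, hjk⟩ := hdeg
    refine .inr ⟨sum_mul_pow_card_inter_lt_one hp hfix hu0 hu1 (by simp) (by simp) hij, ?_⟩
    simp only [δ]
    rw [hψ i j k hij hik hjk, hχ i j k hij hik hjk, tripleRHS_sub_tripleRHS]
  funext i j k
  exact sub_eq_zero.mp (congrFun hδ (i, j, k))

theorem stmt4_general {N n : ℕ} (hn : 1 ≤ n)
    (p : Event N → ℝ) (hp : IsDist p) (hfix : FixationAxiom p)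
    (u : ℝ) (hu0 : 0 < u) (hu1 : u ≤ 1)
    (π : (Fin N → Fin n) → ℝ)
    (hπ : IsStationary (transMat N n p u) π) :
    (∀ i j k : Fin N, i ≠ j → i ≠ k → j ≠ k →
        phi3 π i j k = tripleRHS n p u (phi2 π) (phi3 π) i j k) ∧
    (∀ ψ : Fin N → Fin N → Fin N → ℝ,
        (∀ a b, ψ a a b = phi2 π a b) →
        (∀ a b, ψ a b a = phi2 π a b) →
        (∀ a b, ψ a b b = phi2 π a b) →
        (∀ i j k : Fin N, i ≠ j → i ≠ k → j ≠ k →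
          ψ i j k = tripleRHS n p u (phi2 π) ψ i j k) →
        ψ = fun i j k => phi3 π i j k) := by
  have hn₀ : n ≠ 0 := Nat.one_le_iff_ne_zero.mp hn
  have hrec : ∀ i j k : Fin N, i ≠ j → i ≠ k → j ≠ k →
      phi3 π i j k = tripleRHS n p u (phi2 π) (phi3 π) i j k := fun i j k hij hik hjk => by
    rw [phi3_eq_sum_tripleEventTerm hn₀ hπ hij hik hjk,
      sum_tripleEventTerm_eq_tripleRHS hn₀ p u _ _ hij hik hjk]
  refine ⟨hrec, fun ψ hψ₁ hψ₂ hψ₃ hψ => eq_of_eq_tripleRHS hp hfix hu0 hu1 (phi2 π) ?_ hψ hrec⟩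
  rintro i j k (rfl | rfl | rfl)
  · rw [hψ₁, phi3_self_left]
  · rw [hψ₂, phi3_self_outer]
  · rw [hψ₃, phi3_self_right]

/-- The triple identity-by-state probabilities satisfy the stated
recurrence, and together with the pairwise probabilities they are uniquely
determined by it. -/
theorem stmt4 {N n : ℕ} (hN : 1 ≤ N) (hn : 1 ≤ n)
    (p : Event N → ℝ) (hp : IsDist p) (hfix : FixationAxiom p)
    (u : ℝ) (hu0 : 0 < u) (hu1 : u ≤ 1)
    (π : (Fin N → Fin n) → ℝ)
    (hπ : IsStationary (transMat N n p u) π)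
    (huniq : ∀ π', IsStationary (transMat N n p u) π' → π' = π) :
    (∀ i j k : Fin N, i ≠ j → i ≠ k → j ≠ k →
        phi3 π i j k = tripleRHS n p u (phi2 π) (phi3 π) i j k) ∧
    (∀ ψ : Fin N → Fin N → Fin N → ℝ,
        (∀ a b, ψ a a b = phi2 π a b) →
        (∀ a b, ψ a b a = phi2 π a b) →
        (∀ a b, ψ a b b = phi2 π a b) →
        (∀ i j k : Fin N, i ≠ j → i ≠ k → j ≠ k →
          ψ i j k = tripleRHS n p u (phi2 π) ψ i j k) →
        ψ = fun i j k => phi3 π i j k) :=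
  stmt4_general hn p hp hfix u hu0 hu1 π hπ

end SCT
end

section
/- Suppose the neutral replacement rule replaces at most one individual per time step, i.e., p°_{(R,α)} = 0 whenever |R| ≥ 2. Then for pairwise distinct sites i, j, k, φ_ijk = u·(1/n)·φ_jk·Σ_{(R,α) : {i,j,k}∩R = {i}} p°_{(R,α)} + u·(1/n)·φ_ik·Σ_{(R,α) : {i,j,k}∩R = {j}} p°_{(R,α)} + u·(1/n)·φ_ij·Σ_{(R,α) : {i,j,k}∩R = {k}} p°_{(R,α)} + φ_ijk·Σ_{(R,α) : |{i,j,k}∩R| = 0} p°_{(R,α)} + (1−u)·Σ_{(R,α) : |{i,j,k}∩R| = 1} p°_{(R,α)}·φ_{α̃(i)α̃(j)α̃(k)}. -/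
/-!
Average the indicator that sites `i`, `j`, `k` carry the same strategy against the stationary
chain and split the transition over replacement events. An event replacing none of the three
sites leaves the indicator unchanged. An event replacing exactly one of them, say `i`, gives it a
uniformly random mutant strategy with probability `u`, which agrees with the other two exactly
when `j` and `k` agree, with conditional probability `1/n`; otherwise `i` copies its parent
`α(i)`, and the indicator becomes the one at `α̃(i), α̃(j), α̃(k)`. Events replacing two or more
sites have probability zero.
-/

open Finset

namespace SCT

theorem sum_mul_eq_sum_mul_sum_of_stationary {S : Type*} [Fintype S] (P : S → S → ℝ)
    (π : S → ℝ) (hπ : ∀ y, ∑ x, π x * P x y = π y) (f : S → ℝ) :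
    ∑ y, π y * f y = ∑ x, π x * ∑ y, P x y * f y :=
  calc ∑ y, π y * f y = ∑ y, (∑ x, π x * P x y) * f y := by simp only [hπ]
    _ = ∑ x, π x * ∑ y, P x y * f y := by
      simp only [Finset.sum_mul, Finset.mul_sum, mul_assoc]
      exact Finset.sum_comm

section

variable {N n : ℕ}

noncomputable def eventKernel (n : ℕ) (u : ℝ) (E : Event N) (x y : Fin N → Fin n) : ℝ :=
  (∏ l ∈ E.1, ((1 - u) * (if y l = x (E.2 l) then (1:ℝ) else 0) + u / (n:ℝ))) *
    (∏ l ∈ E.1ᶜ, (if y l = x l then (1:ℝ) else 0))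

theorem transMat_eq_sum_eventKernel (p : Event N → ℝ) (u : ℝ) (x y : Fin N → Fin n) :
    transMat N n p u x y = ∑ E, p E * eventKernel n u E x y := by
  simp only [transMat, eventKernel, mul_assoc]

def ibs3 (x : Fin N → Fin n) (i j k : Fin N) : ℝ :=
  if x i = x j ∧ x j = x k then 1 else 0

theorem sum_eventKernel_mul_of_eq_empty (u : ℝ) {E : Event N} (hE : E.1 = ∅)
    (f : (Fin N → Fin n) → ℝ) (x : Fin N → Fin n) :
    ∑ y, eventKernel n u E x y * f y = f x := by
  simp [eventKernel, hE, Finset.prod_boole, ← funext_iff]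

theorem prod_compl_singleton_ite_eq (r : Fin N) (x y : Fin N → Fin n) :
    (∏ l ∈ ({r} : Finset (Fin N))ᶜ, (if y l = x l then (1:ℝ) else 0)) =
      if y = Function.update x r (y r) then 1 else 0 := by
  simp [Finset.prod_boole, Function.eq_update_iff]

theorem sum_ite_eq_update {M : Type*} [AddCommMonoid M] (r : Fin N) (x : Fin N → Fin n)
    (h : (Fin N → Fin n) → M) :
    ∑ y, (if y = Function.update x r (y r) then h y else 0) =
      ∑ c, h (Function.update x r c) := by
  have hy (y : Fin N → Fin n) : ∑ c, (if y = Function.update x r c then h y else 0) =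
      if y = Function.update x r (y r) then h y else 0 :=
    Finset.sum_eq_single (y r) (fun c _ hc => if_neg fun hyc => hc (by simp [hyc]))
      (by simp)
  calc ∑ y, (if y = Function.update x r (y r) then h y else 0)
      = ∑ y, ∑ c, (if y = Function.update x r c then h y else 0) :=
        Finset.sum_congr rfl fun y _ => (hy y).symm
    _ = ∑ c, h (Function.update x r c) := by
      rw [Finset.sum_comm]
      simp only [Finset.sum_ite_eq', Finset.mem_univ, if_true]

theorem update_eq_comp_extMap {E : Event N} {r : Fin N} (hE : E.1 = {r})
    (x : Fin N → Fin n) : Function.update x r (x (E.2 r)) = x ∘ extMap E := by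
  ext l
  by_cases hl : l = r <;> simp [extMap, hE, hl]

theorem sum_eventKernel_mul_of_eq_singleton (u : ℝ) {E : Event N} {r : Fin N}
    (hE : E.1 = {r}) (f : (Fin N → Fin n) → ℝ) (x : Fin N → Fin n) :
    ∑ y, eventKernel n u E x y * f y =
      (1 - u) * f (x ∘ extMap E) + u / n * ∑ c, f (Function.update x r c) := by
  have hK (y : Fin N → Fin n) : eventKernel n u E x y * f y =
      if y = Function.update x r (y r) then
        ((1 - u) * (if y r = x (E.2 r) then (1:ℝ) else 0) + u / n) * f y else 0 := by
    rw [eventKernel, hE, Finset.prod_singleton, prod_compl_singleton_ite_eq]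
    simp only [mul_ite, ite_mul, mul_one, mul_zero, zero_mul]
  rw [Finset.sum_congr rfl fun y _ => hK y, sum_ite_eq_update]
  simp only [Function.update_self, add_mul, Finset.sum_add_distrib, ite_mul, one_mul,
    zero_mul, mul_assoc, ← Finset.mul_sum, Finset.sum_ite_eq', Finset.mem_univ, if_true,
    update_eq_comp_extMap hE]

theorem phi3_eq_sum_eventKernel (p : Event N → ℝ) (u : ℝ) (π : (Fin N → Fin n) → ℝ)
    (hπ : ∀ y, ∑ x, π x * transMat N n p u x y = π y) (i j k : Fin N) :
    phi3 π i j k = ∑ E, p E * ∑ x, π x * ∑ y, eventKernel n u E x y * ibs3 y i j k := by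
  have hmix (x : Fin N → Fin n) : π x * ∑ y, transMat N n p u x y * ibs3 y i j k =
      ∑ E, p E * (π x * ∑ y, eventKernel n u E x y * ibs3 y i j k) := by
    simp only [transMat_eq_sum_eventKernel, Finset.sum_mul, Finset.mul_sum, mul_assoc,
      mul_left_comm (π x)]
    exact Finset.sum_comm
  calc phi3 π i j k = ∑ x, π x * ∑ y, transMat N n p u x y * ibs3 y i j k :=
        sum_mul_eq_sum_mul_sum_of_stationary _ π hπ _
    _ = ∑ E, ∑ x, p E * (π x * ∑ y, eventKernel n u E x y * ibs3 y i j k) := by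
      simp only [hmix]
      exact Finset.sum_comm
    _ = _ := Finset.sum_congr rfl fun E _ => (Finset.mul_sum _ _ _).symm

theorem sum_mul_sum_eventKernel_ibs3_of_eq_singleton (u : ℝ) (π : (Fin N → Fin n) → ℝ)
    {E : Event N} {r : Fin N} (hE : E.1 = {r}) (i j k : Fin N) :
    ∑ x, π x * ∑ y, eventKernel n u E x y * ibs3 y i j k =
      (1 - u) * phi3 π (extMap E i) (extMap E j) (extMap E k) +
        u / n * ∑ x, π x * ∑ c, ibs3 (Function.update x r c) i j k := by
  simp only [sum_eventKernel_mul_of_eq_singleton u hE]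
  rw [phi3, Finset.mul_sum, Finset.mul_sum, ← Finset.sum_add_distrib]
  refine Finset.sum_congr rfl fun x _ => ?_
  rw [ibs3, Function.comp_apply, Function.comp_apply, Function.comp_apply]
  ring

theorem sum_mul_sum_ibs3_update_left (π : (Fin N → Fin n) → ℝ) {i j k : Fin N} (hji : j ≠ i)
    (hki : k ≠ i) : ∑ x, π x * ∑ c, ibs3 (Function.update x i c) i j k = phi2 π j k := by
  simp [phi2, ibs3, Function.update_of_ne hji, Function.update_of_ne hki, ite_and]

theorem sum_mul_sum_ibs3_update_middle (π : (Fin N → Fin n) → ℝ) {i j k : Fin N} (hij : i ≠ j)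
    (hkj : k ≠ j) : ∑ x, π x * ∑ c, ibs3 (Function.update x j c) i j k = phi2 π i k := by
  simp [phi2, ibs3, Function.update_of_ne hij, Function.update_of_ne hkj, ite_and]

theorem sum_mul_sum_ibs3_update_right (π : (Fin N → Fin n) → ℝ) {i j k : Fin N} (hik : i ≠ k)
    (hjk : j ≠ k) : ∑ x, π x * ∑ c, ibs3 (Function.update x k c) i j k = phi2 π i j := by
  simp [phi2, ibs3, Function.update_of_ne hik, Function.update_of_ne hjk, ite_and]

theorem sum_mul_sum_ibs3_update_of_ne (π : (Fin N → Fin n) → ℝ) {i j k r : Fin N} (hir : i ≠ r)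
    (hjr : j ≠ r) (hkr : k ≠ r) :
    ∑ x, π x * ∑ c, ibs3 (Function.update x r c) i j k = n * phi3 π i j k := by
  simp [phi3, ibs3, Function.update_of_ne hir, Function.update_of_ne hjr,
    Function.update_of_ne hkr, Finset.mul_sum, mul_comm]

noncomputable def phi3Summand (n : ℕ) (u : ℝ) (π : (Fin N → Fin n) → ℝ) (E : Event N)
    (i j k : Fin N) : ℝ :=
  (if ({i, j, k} : Finset (Fin N)) ∩ E.1 = {i} then u * (1/(n:ℝ)) * phi2 π j k else 0)
    + (if ({i, j, k} : Finset (Fin N)) ∩ E.1 = {j} then u * (1/(n:ℝ)) * phi2 π i k else 0)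
    + (if ({i, j, k} : Finset (Fin N)) ∩ E.1 = {k} then u * (1/(n:ℝ)) * phi2 π i j else 0)
    + (if (({i, j, k} : Finset (Fin N)) ∩ E.1).card = 0 then phi3 π i j k else 0)
    + (if (({i, j, k} : Finset (Fin N)) ∩ E.1).card = 1 then
        (1 - u) * phi3 π (extMap E i) (extMap E j) (extMap E k) else 0)

theorem sum_mul_sum_eventKernel_ibs3 (hn : n ≠ 0) (u : ℝ) (π : (Fin N → Fin n) → ℝ)
    {E : Event N} (hE : E.1.card ≤ 1) {i j k : Fin N} (hij : i ≠ j) (hik : i ≠ k)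
    (hjk : j ≠ k) :
    ∑ x, π x * ∑ y, eventKernel n u E x y * ibs3 y i j k = phi3Summand n u π E i j k := by
  rw [phi3Summand]
  obtain hE0 | ⟨r, hEr⟩ : E.1 = ∅ ∨ ∃ r, E.1 = {r} := by
    rcases Nat.le_one_iff_eq_zero_or_eq_one.mp hE with h | h
    exacts [Or.inl (Finset.card_eq_zero.mp h), Or.inr (Finset.card_eq_one.mp h)]
  · simp only [sum_eventKernel_mul_of_eq_empty u hE0]
    simp [hE0, phi3, ibs3]
  rw [sum_mul_sum_eventKernel_ibs3_of_eq_singleton u π hEr]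
  by_cases hri : r = i
  · subst hri
    rw [sum_mul_sum_ibs3_update_left π hij.symm hik.symm]
    simp [extMap, hEr, hij, hik, hij.symm, hik.symm, Finset.inter_singleton_of_mem,
      div_eq_mul_inv, add_comm]
  by_cases hrj : r = j
  · subst hrj
    rw [sum_mul_sum_ibs3_update_middle π hij hjk.symm]
    simp [extMap, hEr, hij, hjk, hij.symm, hjk.symm, Finset.inter_singleton_of_mem,
      div_eq_mul_inv, add_comm]
  by_cases hrk : r = k
  · subst hrk
    rw [sum_mul_sum_ibs3_update_right π hik hjk]
    simp [extMap, hEr, hik, hjk, hik.symm, hjk.symm, Finset.inter_singleton_of_mem,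
      div_eq_mul_inv, add_comm]
  have hfix {l : Fin N} (hl : r ≠ l) : extMap E l = l := by simp [extMap, hEr, Ne.symm hl]
  rw [hfix hri, hfix hrj, hfix hrk,
    sum_mul_sum_ibs3_update_of_ne π (Ne.symm hri) (Ne.symm hrj) (Ne.symm hrk), ← mul_assoc,
    div_mul_cancel₀ u (Nat.cast_ne_zero.mpr hn), ← add_mul, sub_add_cancel, one_mul]
  simp [hEr, hri, hrj, hrk]

end

theorem stmt5_general {N n : ℕ} (hn : 1 ≤ n)
    (p : Event N → ℝ)
    (hsingle : ∀ E : Event N, 2 ≤ E.1.card → p E = 0)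
    (u : ℝ)
    (π : (Fin N → Fin n) → ℝ)
    (hπ : IsStationary (transMat N n p u) π)
    (i j k : Fin N) (hij : i ≠ j) (hik : i ≠ k) (hjk : j ≠ k) :
    phi3 π i j k =
      u * (1/(n:ℝ)) * phi2 π j k *
        (∑ E ∈ univ.filter
          (fun E : Event N => ({i, j, k} : Finset (Fin N)) ∩ E.1 = {i}), p E)
      + u * (1/(n:ℝ)) * phi2 π i k *
        (∑ E ∈ univ.filter
          (fun E : Event N => ({i, j, k} : Finset (Fin N)) ∩ E.1 = {j}), p E)
      + u * (1/(n:ℝ)) * phi2 π i j *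
        (∑ E ∈ univ.filter
          (fun E : Event N => ({i, j, k} : Finset (Fin N)) ∩ E.1 = {k}), p E)
      + phi3 π i j k *
        (∑ E ∈ univ.filter
          (fun E : Event N => (({i, j, k} : Finset (Fin N)) ∩ E.1).card = 0), p E)
      + (1-u) *
        (∑ E ∈ univ.filter
          (fun E : Event N => (({i, j, k} : Finset (Fin N)) ∩ E.1).card = 1),
            p E * phi3 π (extMap E i) (extMap E j) (extMap E k)) := by
  refine (phi3_eq_sum_eventKernel p u π hπ.2 i j k).trans ?_
  have hevent (E : Event N) : p E * ∑ x, π x * ∑ y, eventKernel n u E x y * ibs3 y i j k =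
      p E * phi3Summand n u π E i j k := by
    by_cases hpE : p E = 0
    · simp only [hpE, zero_mul]
    have hcard : E.1.card ≤ 1 := by
      by_contra h
      exact hpE (hsingle E (by omega))
    rw [sum_mul_sum_eventKernel_ibs3 (by omega) u π hcard hij hik hjk]
  rw [Finset.sum_congr rfl fun E _ => hevent E]
  simp only [phi3Summand, Finset.sum_filter, Finset.mul_sum, ← Finset.sum_add_distrib]
  refine Finset.sum_congr rfl fun E _ => ?_
  split_ifs <;> ring

/-- If at most one individual is replaced per time step, the triple
identity-by-state probabilities satisfy the simplified recurrence. -/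
theorem stmt5 {N n : ℕ} (hN : 1 ≤ N) (hn : 1 ≤ n)
    (p : Event N → ℝ) (hp : IsDist p) (hfix : FixationAxiom p)
    (hsingle : ∀ E : Event N, 2 ≤ E.1.card → p E = 0)
    (u : ℝ) (hu0 : 0 < u) (hu1 : u ≤ 1)
    (π : (Fin N → Fin n) → ℝ)
    (hπ : IsStationary (transMat N n p u) π)
    (huniq : ∀ π', IsStationary (transMat N n p u) π' → π' = π)
    (i j k : Fin N) (hij : i ≠ j) (hik : i ≠ k) (hjk : j ≠ k) :
    phi3 π i j k =
      u * (1/(n:ℝ)) * phi2 π j k *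
        (∑ E ∈ univ.filter
          (fun E : Event N => ({i, j, k} : Finset (Fin N)) ∩ E.1 = {i}), p E)
      + u * (1/(n:ℝ)) * phi2 π i k *
        (∑ E ∈ univ.filter
          (fun E : Event N => ({i, j, k} : Finset (Fin N)) ∩ E.1 = {j}), p E)
      + u * (1/(n:ℝ)) * phi2 π i j *
        (∑ E ∈ univ.filter
          (fun E : Event N => ({i, j, k} : Finset (Fin N)) ∩ E.1 = {k}), p E)
      + phi3 π i j k *
        (∑ E ∈ univ.filter
          (fun E : Event N => (({i, j, k} : Finset (Fin N)) ∩ E.1).card = 0), p E)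
      + (1-u) *
        (∑ E ∈ univ.filter
          (fun E : Event N => (({i, j, k} : Finset (Fin N)) ∩ E.1).card = 1),
            p E * phi3 π (extMap E i) (extMap E j) (extMap E k)) :=
  stmt5_general hn p hsingle u π hπ i j k hij hik hjk

end SCT
end

section
/- For every weight vector v ∈ ℝ^N and every strategy y ∈ {1,…,n}: E_{π°}[ Δ̂'_{v,y}(X) ] = Σ_{i=1}^N ( d̂°_{v,i} − (1−u)·b̂°_{v,i} ) · d/dδ|_{δ=0} P_{π_δ}[X_i = y]. -/
/-!
Under a stationary distribution the expected one-step change of any function of the state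
vanishes, and `Δ̂_{v,y}` is the expected one-step change of the weighted abundance
`Σ_k v_k 1[x_k = y]`; hence `E_{π_δ}[Δ̂_δ] = 0` for all small `δ ≥ 0`. At `δ = 0`, `Δ̂` is affine
in the indicators `1[x_i = y]` with coefficients `(1-u) b̂°_{v,i} - d̂°_{v,i}`, so `E_{π_δ}[Δ̂_0]`
is an affine function of the marginals `P_{π_δ}[X_i = y]`. Dividing
`0 = E_{π_δ}[Δ̂_δ - Δ̂_0] + E_{π_δ}[Δ̂_0]` by `δ` and letting `δ → 0⁺` gives the identity. The
limit of the first term needs `π_δ → π°`, which follows from compactness of the simplex and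
uniqueness of the neutral stationary distribution.
-/

open Finset

namespace SCT

/-- The probability that `i` replaces `j`, for fecundity vector `F`, under the
replacement-rule family `p`. -/
noncomputable def eRep {N : ℕ} (p : (Fin N → ℝ) → Event N → ℝ) (F : Fin N → ℝ)
    (i j : Fin N) : ℝ :=
  ∑ E ∈ univ.filter (fun E : Event N => j ∈ E.1 ∧ E.2 j = i), p F E

/-- `mCoef p k i j` is the marginal effect `m_k^{ij}` of `k`'s fecundity on the
probability that `i` replaces `j`, evaluated at the all-ones fecundity vector. -/
noncomputable def mCoef {N : ℕ} (p : (Fin N → ℝ) → Event N → ℝ) (k i j : Fin N) : ℝ :=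
  fderiv ℝ (fun F => eRep p F i j) (fun _ => (1:ℝ)) (Pi.single k 1)

/-- Neutral replacement probability `e°_{ij}`. -/
noncomputable def e0 {N : ℕ} (p : (Fin N → ℝ) → Event N → ℝ) (i j : Fin N) : ℝ :=
  eRep p (fun _ => (1:ℝ)) i j

/-- Neutral death probability `d°_i`. -/
noncomputable def d0 {N : ℕ} (p : (Fin N → ℝ) → Event N → ℝ) (i : Fin N) : ℝ :=
  ∑ j, e0 p j i

/-- Ancestral random-walk matrix `A_{ij} := e°_{ji} / d°_i`. -/
noncomputable def Amat {N : ℕ} (p : (Fin N → ℝ) → Event N → ℝ) :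
    Matrix (Fin N) (Fin N) ℝ :=
  Matrix.of fun i j => e0 p j i / d0 p i

/-- Mutation-weighted quantity `μ_i := (1/N)·Σ_j u·(Ã⁻¹)_{ji}` with
`Ã := I − (1−u)A`. -/
noncomputable def muVec {N : ℕ} (p : (Fin N → ℝ) → Event N → ℝ) (u : ℝ) (i : Fin N) : ℝ :=
  (1/(N:ℝ)) * ∑ j, u * ((1 - (1-u) • Amat p)⁻¹ j i)

/-- Mutation-weighted reproductive value `v*_i := μ_i / (u·d°_i)`. -/
noncomputable def vstar {N : ℕ} (p : (Fin N → ℝ) → Event N → ℝ) (u : ℝ) (i : Fin N) : ℝ :=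
  muVec p u i / (u * d0 p i)

/-- Fecundity vector `F_i(x) = exp(δ·u_i(x))` for payoff functions `pay`. -/
noncomputable def fec {N n : ℕ} (pay : Fin N → (Fin N → Fin n) → ℝ) (δ : ℝ)
    (x : Fin N → Fin n) : Fin N → ℝ :=
  fun i => Real.exp (δ * pay i x)

/-- Transition probabilities of the mutation–selection chain at selection
intensity `δ` for payoff functions `pay`. -/
noncomputable def PdelGen (N n : ℕ) (p : (Fin N → ℝ) → Event N → ℝ) (u : ℝ)
    (pay : Fin N → (Fin N → Fin n) → ℝ) (δ : ℝ)
    (x y : Fin N → Fin n) : ℝ :=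
  transMat N n (p (fec pay δ x)) u x y

/-- The expected change `Δ̂_{v,y}(x)` in the `v`-weighted abundance of strategy
`y` from state `x`, at selection intensity `δ`. -/
noncomputable def Dhat (N n : ℕ) (p : (Fin N → ℝ) → Event N → ℝ) (u : ℝ)
    (pay : Fin N → (Fin N → Fin n) → ℝ) (v : Fin N → ℝ) (y : Fin n) (δ : ℝ)
    (x : Fin N → Fin n) : ℝ :=
  (∑ i, (if x i = y then (1:ℝ) else 0) *
      ((∑ j, eRep p (fec pay δ x) i j * v j) - (∑ j, eRep p (fec pay δ x) j i * v i)))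
    + (u/(n:ℝ)) * ∑ i, (∑ j, eRep p (fec pay δ x) i j * v j) *
        (1 - (n:ℝ) * (if x i = y then (1:ℝ) else 0))

/-- The derivative `Δ̂'_{v,y}(x)` of `Δ̂` in `δ` at `δ = 0`, for fixed state `x`. -/
noncomputable def Dhat' (N n : ℕ) (p : (Fin N → ℝ) → Event N → ℝ) (u : ℝ)
    (pay : Fin N → (Fin N → Fin n) → ℝ) (v : Fin N → ℝ) (y : Fin n)
    (x : Fin N → Fin n) : ℝ :=
  deriv (fun δ => Dhat N n p u pay v y δ x) 0

open Filter Topology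

section

variable {N n : ℕ}

lemma fec_zero (pay : Fin N → (Fin N → Fin n) → ℝ) (x : Fin N → Fin n) :
    fec pay 0 x = fun _ => 1 :=
  funext fun i => by simp [fec]

lemma sum_prod_mul_ite_eq {ι β : Type*} [Fintype ι] [DecidableEq ι] [Fintype β] [DecidableEq β]
    (f : ι → β → ℝ) (hf : ∀ i, ∑ b, f i b = 1) (k : ι) (b : β) :
    ∑ g : ι → β, (∏ i, f i (g i)) * (if g k = b then 1 else 0) = f k b := by
  have hmark : ∀ g : ι → β, (∏ i, f i (g i)) * (if g k = b then 1 else 0)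
      = ∏ i, (f i (g i) * if i = k then (if g i = b then 1 else 0) else 1) := fun g => by
    rw [Finset.prod_mul_distrib, Finset.prod_ite_eq']
    simp
  simp only [hmark]
  rw [← Fintype.prod_sum (fun i c => f i c * if i = k then (if c = b then 1 else 0) else 1),
    Finset.prod_eq_single k (fun i _ hik => by simp [hik, hf i]) (by simp)]
  simp

noncomputable def weightedAbundance (v : Fin N → ℝ) (y : Fin n) (x : Fin N → Fin n) : ℝ :=
  ∑ k, v k * if x k = y then 1 else 0

/-- Conditional on the event `E`, the new strategies at the sites are independent, with these
laws. -/
noncomputable def offspringLaw (u : ℝ) (E : Event N) (x : Fin N → Fin n) (i : Fin N)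
    (a : Fin n) : ℝ :=
  if i ∈ E.1 then (1 - u) * (if a = x (E.2 i) then 1 else 0) + u / n
  else if a = x i then 1 else 0

lemma sum_offspringLaw (hn : n ≠ 0) (u : ℝ) (E : Event N) (x : Fin N → Fin n) (i : Fin N) :
    ∑ a, offspringLaw u E x i a = 1 := by
  unfold offspringLaw
  split_ifs
  · rw [Finset.sum_add_distrib, ← Finset.mul_sum, Finset.sum_ite_eq']
    simp only [Finset.sum_const, Finset.card_univ, Fintype.card_fin, nsmul_eq_mul,
      Finset.mem_univ, if_true, mul_one]
    rw [mul_div_cancel₀ _ (Nat.cast_ne_zero.mpr hn)]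
    ring
  · simp

lemma transMat_eq_sum_prod_offspringLaw (q : Event N → ℝ) (u : ℝ) (x x' : Fin N → Fin n) :
    transMat N n q u x x' = ∑ E, q E * ∏ i, offspringLaw u E x i (x' i) := by
  refine Finset.sum_congr rfl fun E _ => ?_
  rw [mul_assoc, ← Finset.prod_mul_prod_compl E.1]
  congr 2 <;> refine Finset.prod_congr rfl fun i hi => ?_
  · simp [offspringLaw, hi]
  · simp [offspringLaw, Finset.mem_compl.mp hi, eq_comm]

lemma sum_transMat_mul_weightedAbundance_sub (hn : n ≠ 0) (q : Event N → ℝ) (hq : ∑ E, q E = 1)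
    (u : ℝ) (x : Fin N → Fin n) (v : Fin N → ℝ) (y : Fin n) :
    ∑ x', transMat N n q u x x' * weightedAbundance v y x' - weightedAbundance v y x
      = ∑ E, q E * ∑ j ∈ E.1, v j * ((1 - u) * (if x (E.2 j) = y then 1 else 0) + u / n
          - if x j = y then 1 else 0) := by
  have hevent : ∀ E : Event N,
      ∑ x', (∏ i, offspringLaw u E x i (x' i)) * weightedAbundance v y x'
        = ∑ k, v k * offspringLaw u E x k y := fun E => by
    simp only [weightedAbundance, Finset.mul_sum, mul_left_comm _ (v _)]
    rw [Finset.sum_comm]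
    simp only [← Finset.mul_sum, sum_prod_mul_ite_eq _ (sum_offspringLaw hn u E x)]
  have hstay : ∀ E : Event N, ∑ k, v k * offspringLaw u E x k y - weightedAbundance v y x
      = ∑ j ∈ E.1, v j * ((1 - u) * (if x (E.2 j) = y then 1 else 0) + u / n
          - if x j = y then 1 else 0) := fun E => by
    rw [weightedAbundance, ← Finset.sum_sub_distrib, ← Finset.sum_add_sum_compl E.1]
    rw [Finset.sum_eq_zero (s := E.1ᶜ) fun k hk => by
      simp [offspringLaw, Finset.mem_compl.mp hk, eq_comm]]
    refine (add_zero _).trans (Finset.sum_congr rfl fun j hj => ?_)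
    simp only [offspringLaw, hj, if_true, eq_comm (a := y)]
    ring
  calc _ = ∑ E, q E * ∑ k, v k * offspringLaw u E x k y - weightedAbundance v y x := by
        simp only [transMat_eq_sum_prod_offspringLaw, Finset.sum_mul, mul_assoc]
        rw [Finset.sum_comm]
        simp only [← Finset.mul_sum, hevent]
    _ = ∑ E, q E * (∑ k, v k * offspringLaw u E x k y - weightedAbundance v y x) := by
        simp only [mul_sub, Finset.sum_sub_distrib, ← Finset.sum_mul, hq, one_mul]
    _ = _ := by simp only [hstay]

lemma sum_sum_eRep_mul (p : (Fin N → ℝ) → Event N → ℝ) (F : Fin N → ℝ) (f : Fin N → Fin N → ℝ) :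
    ∑ i, ∑ j, eRep p F i j * f i j = ∑ E, p F E * ∑ j ∈ E.1, f (E.2 j) j := by
  simp only [eRep, Finset.sum_filter, Finset.sum_mul, Finset.mul_sum]
  rw [Finset.sum_comm]
  refine (Finset.sum_congr rfl fun j _ => Finset.sum_comm).trans ?_
  rw [Finset.sum_comm]
  refine Finset.sum_congr rfl fun E _ => ?_
  rw [← Finset.sum_add_sum_compl E.1, Finset.sum_eq_zero (s := E.1ᶜ) fun j hj => by
    simp [Finset.mem_compl.mp hj], add_zero]
  exact Finset.sum_congr rfl fun j hj => by simp [hj]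

lemma dhat_eq_sum_sum_eRep (hn : n ≠ 0) (p : (Fin N → ℝ) → Event N → ℝ) (u : ℝ)
    (pay : Fin N → (Fin N → Fin n) → ℝ) (v : Fin N → ℝ) (y : Fin n) (δ : ℝ)
    (x : Fin N → Fin n) :
    Dhat N n p u pay v y δ x = ∑ i, ∑ j, eRep p (fec pay δ x) i j *
      (v j * ((1 - u) * (if x i = y then 1 else 0) + u / n - if x j = y then 1 else 0)) := by
  set e := eRep p (fec pay δ x)
  have hdeath : ∑ i, (if x i = y then (1:ℝ) else 0) * ∑ j, e j i * v i
      = ∑ i, ∑ j, e i j * (v j * if x j = y then 1 else 0) := by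
    simp only [Finset.mul_sum]
    rw [Finset.sum_comm]
    exact Finset.sum_congr rfl fun _ _ => Finset.sum_congr rfl fun _ _ => by ring
  simp only [Dhat, mul_sub, Finset.sum_sub_distrib]
  rw [hdeath]
  simp only [Finset.mul_sum, Finset.sum_mul, ← Finset.sum_sub_distrib, ← Finset.sum_add_distrib]
  refine Finset.sum_congr rfl fun i _ => Finset.sum_congr rfl fun j _ => ?_
  field_simp
  ring

lemma dhat_eq_expected_change (hn : n ≠ 0) (p : (Fin N → ℝ) → Event N → ℝ)
    (u : ℝ) (pay : Fin N → (Fin N → Fin n) → ℝ) (v : Fin N → ℝ) (y : Fin n) (δ : ℝ)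
    (x : Fin N → Fin n) (hp : ∑ E, p (fec pay δ x) E = 1) :
    Dhat N n p u pay v y δ x
      = ∑ x', PdelGen N n p u pay δ x x' * weightedAbundance v y x' - weightedAbundance v y x := by
  simp only [PdelGen]
  rw [dhat_eq_sum_sum_eRep hn, sum_sum_eRep_mul, sum_transMat_mul_weightedAbundance_sub hn _ hp]

lemma IsStationary.sum_mul_expected_change_eq_zero {P : (Fin N → Fin n) → (Fin N → Fin n) → ℝ}
    {π : (Fin N → Fin n) → ℝ} (hπ : IsStationary P π) (w : (Fin N → Fin n) → ℝ) :
    ∑ x, π x * (∑ x', P x x' * w x' - w x) = 0 := by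
  have hflow : ∑ x, π x * ∑ x', P x x' * w x' = ∑ x', π x' * w x' := by
    simp only [Finset.mul_sum, ← mul_assoc]
    rw [Finset.sum_comm]
    simp only [← Finset.sum_mul, hπ.2]
  rw [Finset.sum_congr rfl fun x _ => mul_sub _ _ _, Finset.sum_sub_distrib, hflow, sub_self]

lemma dhat_zero_eq (hn : n ≠ 0) (p : (Fin N → ℝ) → Event N → ℝ) (u : ℝ)
    (pay : Fin N → (Fin N → Fin n) → ℝ) (v : Fin N → ℝ) (y : Fin n) (x : Fin N → Fin n) :
    Dhat N n p u pay v y 0 x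
      = ∑ i, ((1 - u) * (∑ j, e0 p i j * v j) - ∑ j, e0 p j i * v i) *
          (if x i = y then 1 else 0) + u / n * ∑ i, ∑ j, e0 p i j * v j := by
  simp only [Dhat, fec_zero, ← e0.eq_def]
  set b := fun i => ∑ j, e0 p i j * v j
  rw [Finset.mul_sum, Finset.mul_sum, ← Finset.sum_add_distrib, ← Finset.sum_add_distrib]
  have hun : u / n * n = u := div_mul_cancel₀ u (Nat.cast_ne_zero.mpr hn)
  exact Finset.sum_congr rfl fun i _ =>
    by linear_combination -(b i * if x i = y then 1 else 0) * hun

lemma differentiableAt_p_fec {p : (Fin N → ℝ) → Event N → ℝ} {E : Event N}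
    (hp : DifferentiableAt ℝ (fun G => p G E) (fun _ => 1))
    (pay : Fin N → (Fin N → Fin n) → ℝ) (x : Fin N → Fin n) :
    DifferentiableAt ℝ (fun δ => p (fec pay δ x) E) 0 := by
  have hfec : DifferentiableAt ℝ (fun δ => fec pay δ x) 0 :=
    differentiableAt_pi.mpr fun i => (differentiableAt_id.mul_const _).exp
  exact DifferentiableAt.comp (g := fun G => p G E) 0 (fec_zero pay x ▸ hp) hfec

lemma differentiableAt_dhat {p : (Fin N → ℝ) → Event N → ℝ}
    (hp : ∀ E, DifferentiableAt ℝ (fun G => p G E) (fun _ => 1)) (u : ℝ)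
    (pay : Fin N → (Fin N → Fin n) → ℝ) (v : Fin N → ℝ) (y : Fin n) (x : Fin N → Fin n) :
    DifferentiableAt ℝ (fun δ => Dhat N n p u pay v y δ x) 0 := by
  have he : ∀ i j, DifferentiableAt ℝ (fun δ => eRep p (fec pay δ x) i j) 0 := fun i j =>
    DifferentiableAt.fun_sum fun E _ => differentiableAt_p_fec (hp E) pay x
  unfold Dhat
  fun_prop

lemma continuousAt_pdelGen {p : (Fin N → ℝ) → Event N → ℝ}
    (hp : ∀ E, DifferentiableAt ℝ (fun G => p G E) (fun _ => 1)) (u : ℝ)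
    (pay : Fin N → (Fin N → Fin n) → ℝ) (x x' : Fin N → Fin n) :
    ContinuousAt (fun δ => PdelGen N n p u pay δ x x') 0 := by
  unfold PdelGen transMat
  exact (DifferentiableAt.fun_sum fun E _ =>
    ((differentiableAt_p_fec (hp E) pay x).mul_const _).mul_const _).continuousAt

lemma isStationary_of_tendsto {ι : Type*} {l : Filter ι} [l.NeBot]
    {P : ι → (Fin N → Fin n) → (Fin N → Fin n) → ℝ} {P₀ : (Fin N → Fin n) → (Fin N → Fin n) → ℝ}
    {π : ι → (Fin N → Fin n) → ℝ} {q : (Fin N → Fin n) → ℝ}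
    (hP : ∀ x x', Tendsto (fun i => P i x x') l (𝓝 (P₀ x x'))) (hπ : Tendsto π l (𝓝 q))
    (hst : ∀ᶠ i in l, IsStationary (P i) (π i)) :
    IsStationary P₀ q := by
  have hcoord : ∀ x, Tendsto (fun i => π i x) l (𝓝 (q x)) := tendsto_pi_nhds.mp hπ
  refine ⟨⟨fun x => ge_of_tendsto (hcoord x) (hst.mono fun i h => h.1.1 x), ?_⟩, fun y => ?_⟩
  · exact tendsto_nhds_unique_of_eventuallyEq (tendsto_finsetSum _ fun x _ => hcoord x)
      tendsto_const_nhds (hst.mono fun i h => h.1.2)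
  · exact tendsto_nhds_unique_of_eventuallyEq
      (tendsto_finsetSum _ fun x _ => (hcoord x).mul (hP x y)) (hcoord y)
      (hst.mono fun i h => h.2 y)

lemma tendsto_of_isStationary_of_unique {ι : Type*} {l : Filter ι}
    {P : ι → (Fin N → Fin n) → (Fin N → Fin n) → ℝ} {P₀ : (Fin N → Fin n) → (Fin N → Fin n) → ℝ}
    {π : ι → (Fin N → Fin n) → ℝ} {π₀ : (Fin N → Fin n) → ℝ}
    (hP : ∀ x x', Tendsto (fun i => P i x x') l (𝓝 (P₀ x x')))
    (hst : ∀ᶠ i in l, IsStationary (P i) (π i)) (huniq : ∀ q, IsStationary P₀ q → q = π₀) :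
    Tendsto π l (𝓝 π₀) := by
  refine (isCompact_Icc (a := (0 : (Fin N → Fin n) → ℝ)) (b := 1))
    |>.tendsto_nhds_of_unique_mapClusterPt (hst.mono fun i h => ⟨h.1.1, fun x => ?_⟩)
      fun q _ hq => ?_
  · exact (Finset.single_le_sum (fun z _ => h.1.1 z) (Finset.mem_univ x)).trans h.1.2.le
  · obtain ⟨U, hUl, hU⟩ := mapClusterPt_iff_ultrafilter.mp hq
    exact huniq q (isStationary_of_tendsto (fun x x' => (hP x x').mono_left hUl) hU (hUl hst))

lemma sum_mul_hasDerivAt_eq_neg_of_sum_mul_eq_zero {α : Type*} [Fintype α]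
    {π D : ℝ → α → ℝ} {D' : α → ℝ} {H : ℝ → ℝ} {H' : ℝ}
    (hπ : Tendsto π (𝓝[>] 0) (𝓝 (π 0))) (hD : ∀ x, HasDerivAt (fun δ => D δ x) (D' x) 0)
    (hH : HasDerivAt H H' 0) (hzero : ∀ᶠ δ in 𝓝[≥] 0, ∑ x, π δ x * D δ x = 0)
    (hH_eq : ∀ᶠ δ in 𝓝[≥] 0, ∑ x, π δ x * D 0 x = H δ) :
    ∑ x, π 0 x * D' x = -H' := by
  have hslope : Tendsto (fun δ => ∑ x, π δ x * (δ⁻¹ * (D δ x - D 0 x))) (𝓝[>] 0)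
      (𝓝 (∑ x, π 0 x * D' x)) :=
    tendsto_finsetSum _ fun x _ =>
      (tendsto_pi_nhds.mp hπ x).mul (by simpa using (hD x).tendsto_slope_zero_right)
  have hH_slope : Tendsto (fun δ => -(δ⁻¹ * (H δ - H 0))) (𝓝[>] 0) (𝓝 (-H')) := by
    simpa using hH.tendsto_slope_zero_right.neg
  have hH0 : H 0 = 0 := (hH_eq.self_of_nhdsWithin Set.self_mem_Ici).symm.trans
    (hzero.self_of_nhdsWithin Set.self_mem_Ici)
  refine tendsto_nhds_unique_of_eventuallyEq hslope hH_slope ?_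
  filter_upwards [nhdsWithin_mono 0 Set.Ioi_subset_Ici_self hzero,
    nhdsWithin_mono 0 Set.Ioi_subset_Ici_self hH_eq] with δ hδ hHδ
  simp only [mul_sub, mul_left_comm (π δ _), ← Finset.mul_sum, Finset.sum_sub_distrib, hδ, hHδ,
    hH0]
  ring

lemma IsDist.sum_mul_dhat_zero {π : (Fin N → Fin n) → ℝ} (hπ : IsDist π) (hn : n ≠ 0)
    (p : (Fin N → ℝ) → Event N → ℝ) (u : ℝ) (pay : Fin N → (Fin N → Fin n) → ℝ)
    (v : Fin N → ℝ) (y : Fin n) :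
    ∑ x, π x * Dhat N n p u pay v y 0 x
      = ∑ i, ((1 - u) * (∑ j, e0 p i j * v j) - ∑ j, e0 p j i * v i) *
          (∑ x, π x * if x i = y then 1 else 0) + u / n * ∑ i, ∑ j, e0 p i j * v j := by
  set c := fun i => (1 - u) * (∑ j, e0 p i j * v j) - ∑ j, e0 p j i * v i
  have hexp : ∀ x, π x * Dhat N n p u pay v y 0 x
      = ∑ i, c i * (π x * if x i = y then 1 else 0) + π x * (u / n * ∑ i, ∑ j, e0 p i j * v j) :=
    fun x => by
      rw [dhat_zero_eq hn, mul_add, Finset.mul_sum]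
      exact congrArg (· + _) (Finset.sum_congr rfl fun i _ => by ring)
  rw [Finset.sum_congr rfl fun x _ => hexp x, Finset.sum_add_distrib, ← Finset.sum_mul, hπ.2,
    one_mul, Finset.sum_comm]
  exact congrArg (· + _) (Finset.sum_congr rfl fun i _ => (Finset.mul_sum _ _ _).symm)

end

theorem stmt11_general (N n : ℕ)
    (p : (Fin N → ℝ) → Event N → ℝ)
    (hpdist : ∀ F : Fin N → ℝ, (∀ i, 0 < F i) → IsDist (p F))
    (hpdiff : ∀ (E : Event N) (F : Fin N → ℝ), (∀ i, 0 < F i) →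
      DifferentiableAt ℝ (fun G => p G E) F)
    (u : ℝ)
    (pay : Fin N → (Fin N → Fin n) → ℝ)
    (π : ℝ → (Fin N → Fin n) → ℝ)
    (hstat : ∃ ε > (0:ℝ), ∀ δ : ℝ, 0 ≤ δ → δ < ε →
      IsStationary (PdelGen N n p u pay δ) (π δ) ∧
      ∀ π', IsStationary (PdelGen N n p u pay δ) π' → π' = π δ)
    (hdiff : ∀ (i : Fin N) (y : Fin n),
      DifferentiableAt ℝ (fun δ => ∑ x, π δ x * (if x i = y then (1:ℝ) else 0)) 0)
    (v : Fin N → ℝ) (y : Fin n) :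
    ∑ x, π 0 x * Dhat' N n p u pay v y x =
      ∑ i, ((∑ j, e0 p j i * v i) - (1-u) * ∑ j, e0 p i j * v j) *
        deriv (fun δ => ∑ x, π δ x * (if x i = y then (1:ℝ) else 0)) 0 := by
  obtain ⟨ε, hε, hst⟩ := hstat
  have hn : n ≠ 0 := y.pos.ne'
  have hp : ∀ E, DifferentiableAt ℝ (fun G => p G E) (fun _ => 1) :=
    fun E => hpdiff E _ fun _ => one_pos
  have hnear : ∀ᶠ δ in 𝓝[≥] 0, IsStationary (PdelGen N n p u pay δ) (π δ) := by
    filter_upwards [Ico_mem_nhdsGE hε] with δ hδ using (hst δ hδ.1 hδ.2).1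
  have hcont : Tendsto π (𝓝[>] 0) (𝓝 (π 0)) :=
    tendsto_of_isStationary_of_unique
      (fun x x' => (continuousAt_pdelGen hp u pay x x').mono_left nhdsWithin_le_nhds)
      (nhdsWithin_mono 0 Set.Ioi_subset_Ici_self hnear) (hst 0 le_rfl hε).2
  rw [sum_mul_hasDerivAt_eq_neg_of_sum_mul_eq_zero (D' := fun x => Dhat' N n p u pay v y x) hcont
    (fun x => (differentiableAt_dhat hp u pay v y x).hasDerivAt)
    ((HasDerivAt.fun_sum fun i _ => ((hdiff i y).hasDerivAt.const_mul _)).add_const _)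
    (hnear.mono fun δ hδ => ?_) (hnear.mono fun δ hδ => hδ.1.sum_mul_dhat_zero hn p u pay v y),
    ← Finset.sum_neg_distrib]
  · exact Finset.sum_congr rfl fun i _ => by ring
  · simp only [dhat_eq_expected_change hn p u pay v y δ _ (hpdist _ fun _ => Real.exp_pos _).2]
    exact hδ.sum_mul_expected_change_eq_zero _

/-- for every weight vector `v` and strategy `y`,
`E_{π°}[Δ̂'_{v,y}] = Σ_i (d̂°_{v,i} − (1−u)·b̂°_{v,i}) · d/dδ|₀ P_{π_δ}[X_i = y]`. -/
theorem stmt11 (N n : ℕ) (hN : 1 ≤ N) (hn : 1 ≤ n)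
    (p : (Fin N → ℝ) → Event N → ℝ)
    (hpdist : ∀ F : Fin N → ℝ, (∀ i, 0 < F i) → IsDist (p F))
    (hpdiff : ∀ (E : Event N) (F : Fin N → ℝ), (∀ i, 0 < F i) →
      DifferentiableAt ℝ (fun G => p G E) F)
    (hfix : FixationAxiom (p (fun _ => (1:ℝ))))
    (u : ℝ) (hu0 : 0 < u) (hu1 : u ≤ 1)
    (pay : Fin N → (Fin N → Fin n) → ℝ)
    (π : ℝ → (Fin N → Fin n) → ℝ)
    (hstat : ∃ ε > (0:ℝ), ∀ δ : ℝ, 0 ≤ δ → δ < ε →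
      IsStationary (PdelGen N n p u pay δ) (π δ) ∧
      ∀ π', IsStationary (PdelGen N n p u pay δ) π' → π' = π δ)
    (hdiff : ∀ (i : Fin N) (y : Fin n),
      DifferentiableAt ℝ (fun δ => ∑ x, π δ x * (if x i = y then (1:ℝ) else 0)) 0)
    (v : Fin N → ℝ) (y : Fin n) :
    ∑ x, π 0 x * Dhat' N n p u pay v y x =
      ∑ i, ((∑ j, e0 p j i * v i) - (1-u) * ∑ j, e0 p i j * v j) *
        deriv (fun δ => ∑ x, π δ x * (if x i = y then (1:ℝ) else 0)) 0 :=
  stmt11_general N n p hpdist hpdiff u pay π hstat hdiff v y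

end SCT
end

section
/- With v* the mutation-weighted reproductive value vector, for every strategy y ∈ {1,…,n}: (1/N)·Σ_{i=1}^N d/dδ|_{δ=0} P_{π_δ}[X_i = y] = E_{π°}[ Δ̂'_{v*,y}(X) ]. -/
open Finset

namespace SCT

/-!
Write `h(x) = Σ_k v*_k 1[x_k = y]`. At every selection intensity `Δ̂_{v*,y}(x)` is the expected
one-step change of `h` from `x`, so it averages to zero under `π_δ`. At `δ = 0` the equation
defining `v*` turns `Δ̂_{v*,y}(x)` into `-(1/N)·#{j | x_j = y}` plus a constant. Hence
`E_{π_δ}[Δ̂_δ - Δ̂_0] = (1/N) Σ_i (P_{π_δ}[X_i = y] - P_{π_0}[X_i = y])`; dividing by `δ` and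
letting `δ → 0⁺` gives the claim, because `π_δ → π_0` by compactness of the simplex and uniqueness
of the neutral stationary distribution.
-/

open Filter Topology

section Markov

variable {N n : ℕ}

lemma IsStationary.sum_mul_sum_mul {P : (Fin N → Fin n) → (Fin N → Fin n) → ℝ}
    {π : (Fin N → Fin n) → ℝ} (hπ : IsStationary P π) (h : (Fin N → Fin n) → ℝ) :
    ∑ x, π x * ∑ x', P x x' * h x' = ∑ x, π x * h x := by
  simp only [mul_sum, ← mul_assoc]
  rw [sum_comm]
  simp only [← sum_mul, hπ.2]

/-- The distributions `π t` lie in the compact simplex, and each of their cluster points is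
stationary for the limit chain. -/
lemma tendsto_of_isStationary {ι : Type*} {l : Filter ι}
    {P : ι → (Fin N → Fin n) → (Fin N → Fin n) → ℝ} {P₀ : (Fin N → Fin n) → (Fin N → Fin n) → ℝ}
    {π : ι → (Fin N → Fin n) → ℝ} {π₀ : (Fin N → Fin n) → ℝ}
    (hP : ∀ x x', Tendsto (fun t => P t x x') l (𝓝 (P₀ x x')))
    (hπ : ∀ᶠ t in l, IsStationary (P t) (π t))
    (huniq : ∀ q, IsStationary P₀ q → q = π₀) :
    Tendsto π l (𝓝 π₀) := by
  refine (isCompact_stdSimplex ℝ (Fin N → Fin n)).tendsto_nhds_of_unique_mapClusterPt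
    (hπ.mono fun t ht => ht.1) fun b _ hb => huniq b ?_
  obtain ⟨U, hUl, hUb⟩ := mapClusterPt_iff_ultrafilter.mp hb
  have hU : ∀ᶠ t in (U : Filter ι), IsStationary (P t) (π t) := hUl hπ
  have hcoord : ∀ x, Tendsto (fun t => π t x) U (𝓝 (b x)) := tendsto_pi_nhds.mp hUb
  refine ⟨⟨fun x => ge_of_tendsto (hcoord x) (hU.mono fun t ht => ht.1.1 x), ?_⟩, fun x' => ?_⟩
  · exact tendsto_nhds_unique (tendsto_finsetSum _ fun x _ => hcoord x)
      (tendsto_const_nhds.congr' (hU.mono fun t ht => ht.1.2.symm))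
  · exact tendsto_nhds_unique
      (tendsto_finsetSum _ fun x _ => (hcoord x).mul ((hP x x').mono_left hUl))
      ((hcoord x').congr' (hU.mono fun t ht => (ht.2 x').symm))

end Markov

lemma sum_prod_mul_indicator {ι α R : Type*} [Fintype ι] [DecidableEq ι] [Fintype α]
    [DecidableEq α] [CommSemiring R] (f : ι → α → R) (k : ι) (hf : ∀ i ≠ k, ∑ a, f i a = 1)
    (y : α) :
    ∑ x : ι → α, (∏ i, f i (x i)) * (if x k = y then 1 else 0) = f k y := by
  set g : ι → α → R := fun i a => f i a * if i = k then (if a = y then 1 else 0) else 1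
  have hg : ∀ x : ι → α, (∏ i, f i (x i)) * (if x k = y then 1 else 0) = ∏ i, g i (x i) := by
    intro x
    simp only [g, prod_mul_distrib, prod_ite_eq', mem_univ, if_true]
  simp only [hg, ← Fintype.prod_sum]
  rw [prod_eq_single k (fun i _ hik => by simp [g, hik, hf i hik]) (by simp)]
  simp [g]

section Kernel

variable {N n : ℕ}

/-- The law of the new strategy at site `i` after event `E` from state `x`: a replaced site copies
its parent `E.2 i` unless it mutates (probability `u`) to a uniform strategy. -/
noncomputable def siteKernel (n : ℕ) (u : ℝ) (x : Fin N → Fin n) (E : Event N) (i : Fin N)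
    (z : Fin n) : ℝ :=
  if i ∈ E.1 then (1 - u) * (if z = x (E.2 i) then 1 else 0) + u / n
  else if z = x i then 1 else 0

lemma sum_siteKernel (hn : n ≠ 0) (u : ℝ) (x : Fin N → Fin n) (E : Event N) (i : Fin N) :
    ∑ z, siteKernel n u x E i z = 1 := by
  unfold siteKernel
  split_ifs
  · simp [sum_add_distrib, mul_div_cancel₀ u (Nat.cast_ne_zero.mpr hn)]
  · simp

lemma transMat_eq_sum_prod_siteKernel (q : Event N → ℝ) (u : ℝ) (x y : Fin N → Fin n) :
    transMat N n q u x y = ∑ E, q E * ∏ i, siteKernel n u x E i (y i) := by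
  refine sum_congr rfl fun E _ => ?_
  rw [mul_assoc, ← prod_mul_prod_compl E.1]
  congr 2 <;> refine prod_congr rfl fun i hi => ?_ <;> simp_all [siteKernel]

lemma sum_transMat_mul_indicator (hn : n ≠ 0) (q : Event N → ℝ) (u : ℝ) (x : Fin N → Fin n)
    (k : Fin N) (y : Fin n) :
    ∑ x', transMat N n q u x x' * (if x' k = y then 1 else 0) =
      ∑ E, q E * siteKernel n u x E k y := by
  simp only [transMat_eq_sum_prod_siteKernel, sum_mul, mul_assoc]
  rw [sum_comm]
  simp only [← mul_sum]
  simp only [sum_prod_mul_indicator _ k (fun i _ => sum_siteKernel hn u x _ i)]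

lemma sum_eRep_mul (p : (Fin N → ℝ) → Event N → ℝ) (F : Fin N → ℝ) (k : Fin N)
    (g : Fin N → ℝ) :
    ∑ j, eRep p F j k * g j = ∑ E, if k ∈ E.1 then p F E * g (E.2 k) else 0 := by
  simp only [eRep, sum_mul, sum_filter]
  rw [sum_comm]
  refine sum_congr rfl fun E _ => ?_
  by_cases hk : k ∈ E.1 <;> simp [hk]

end Kernel

section Drift

variable {N n : ℕ}

noncomputable def indicatorDrift (p : (Fin N → ℝ) → Event N → ℝ) (F : Fin N → ℝ) (u : ℝ)
    (x : Fin N → Fin n) (y : Fin n) (k : Fin N) : ℝ :=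
  ∑ j, eRep p F j k * ((1 - u) * (if x j = y then 1 else 0) + u / n - if x k = y then 1 else 0)

lemma sum_transMat_mul_indicator_eq (hn : n ≠ 0) (p : (Fin N → ℝ) → Event N → ℝ)
    (F : Fin N → ℝ) (hp : ∑ E, p F E = 1) (u : ℝ) (x : Fin N → Fin n) (k : Fin N) (y : Fin n) :
    ∑ x', transMat N n (p F) u x x' * (if x' k = y then 1 else 0) =
      (if x k = y then 1 else 0) + indicatorDrift p F u x y k := by
  rw [sum_transMat_mul_indicator hn, indicatorDrift, sum_eRep_mul]
  have hsplit : ∀ E : Event N, p F E * siteKernel n u x E k y = p F E * (if x k = y then 1 else 0)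
      + if k ∈ E.1 then p F E * ((1 - u) * (if x (E.2 k) = y then 1 else 0) + u / n
          - if x k = y then 1 else 0) else 0 := by
    intro E
    simp only [siteKernel, eq_comm (a := y)]
    split_ifs <;> ring
  simp only [hsplit, sum_add_distrib, ← sum_mul, hp, one_mul]

lemma Dhat_eq_sum_indicatorDrift (hn : n ≠ 0) (p : (Fin N → ℝ) → Event N → ℝ) (u : ℝ)
    (pay : Fin N → (Fin N → Fin n) → ℝ) (v : Fin N → ℝ) (y : Fin n) (δ : ℝ)
    (x : Fin N → Fin n) :
    Dhat N n p u pay v y δ x = ∑ k, v k * indicatorDrift p (fec pay δ x) u x y k := by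
  set e := eRep p (fec pay δ x)
  set a : Fin N → ℝ := fun i => if x i = y then 1 else 0
  have hdeath : ∑ i, a i * ∑ j, e j i * v i = ∑ i, ∑ j, a j * e i j * v j := by
    simp only [mul_sum]; rw [sum_comm]
    exact sum_congr rfl fun i _ => sum_congr rfl fun j _ => by ring
  have hrhs : ∑ k, v k * indicatorDrift p (fec pay δ x) u x y k =
      ∑ i, ∑ j, v j * e i j * ((1 - u) * a i + u / n - a j) := by
    simp only [indicatorDrift, mul_sum]; rw [sum_comm]
    exact sum_congr rfl fun i _ => sum_congr rfl fun j _ => by ring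
  have hn' : (n : ℝ) ≠ 0 := Nat.cast_ne_zero.mpr hn
  rw [hrhs, Dhat]
  change ∑ i, a i * ((∑ j, e i j * v j) - ∑ j, e j i * v i) +
    u / n * ∑ i, (∑ j, e i j * v j) * (1 - n * a i) = _
  simp only [mul_sub, sum_sub_distrib]
  rw [hdeath]
  simp only [mul_sum, sum_mul, ← sum_sub_distrib, ← sum_add_distrib]
  refine sum_congr rfl fun i _ => sum_congr rfl fun j _ => ?_
  field_simp
  ring

lemma sum_mul_Dhat_eq_zero_of_isStationary (hn : n ≠ 0) {p : (Fin N → ℝ) → Event N → ℝ}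
    {u : ℝ} {pay : Fin N → (Fin N → Fin n) → ℝ} {δ : ℝ}
    (hp : ∀ x, ∑ E, p (fec pay δ x) E = 1) {π : (Fin N → Fin n) → ℝ}
    (hπ : IsStationary (PdelGen N n p u pay δ) π) (v : Fin N → ℝ) (y : Fin n) :
    ∑ x, π x * Dhat N n p u pay v y δ x = 0 := by
  set h : (Fin N → Fin n) → ℝ := fun x => ∑ k, v k * if x k = y then 1 else 0
  have hstep : ∀ x, Dhat N n p u pay v y δ x = ∑ x', PdelGen N n p u pay δ x x' * h x' - h x := by
    intro x
    simp only [h, mul_sum, mul_left_comm _ (v _)]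
    rw [sum_comm]
    simp only [← mul_sum, PdelGen, sum_transMat_mul_indicator_eq hn p _ (hp x),
      Dhat_eq_sum_indicatorDrift hn, ← sum_sub_distrib, mul_add, add_sub_cancel_left]
  simp only [hstep, mul_sub, sum_sub_distrib, hπ.sum_mul_sum_mul, sub_self]

end Drift

lemma isUnit_det_one_sub_smul {ι : Type*} [Fintype ι] [DecidableEq ι] (A : Matrix ι ι ℝ)
    (hA : ∀ i, ∑ j, |A i j| ≤ 1) {c : ℝ} (hc : |c| < 1) : IsUnit (1 - c • A).det := by
  rw [isUnit_iff_ne_zero]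
  refine det_ne_zero_of_sum_row_lt_diag fun k => ?_
  have hoff : ∑ j ∈ univ.erase k, ‖(1 - c • A) k j‖ = |c| * ∑ j ∈ univ.erase k, |A k j| := by
    rw [mul_sum]
    refine sum_congr rfl fun j hj => ?_
    simp [Matrix.one_apply_ne' (ne_of_mem_erase hj)]
  have hrow : ∑ j ∈ univ.erase k, |A k j| ≤ 1 - |A k k| := by
    linarith [hA k, add_sum_erase univ (fun j => |A k j|) (mem_univ k)]
  have hdiag : 1 - |c| * |A k k| ≤ ‖(1 - c • A) k k‖ := by
    simpa [abs_mul] using abs_sub_abs_le_abs_sub 1 (c * A k k)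
  rw [hoff]
  nlinarith [abs_nonneg c, abs_nonneg (A k k)]

section Neutral

variable {N : ℕ} {p : (Fin N → ℝ) → Event N → ℝ}

lemma sum_abs_Amat (hp0 : ∀ E, 0 ≤ p (fun _ => 1) E) (hd : ∀ i, 0 < d0 p i) (i : Fin N) :
    ∑ j, |Amat p i j| = 1 := by
  have hnonneg : ∀ j, 0 ≤ Amat p i j := fun j =>
    div_nonneg (sum_nonneg fun E _ => hp0 E) (hd i).le
  simp only [abs_of_nonneg (hnonneg _)]
  simp only [Amat, Matrix.of_apply, ← sum_div]
  exact div_self (hd i).ne'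

/-- The vector `w_k = v*_k d°_k` is the row vector `(1/N) 𝟙ᵀ Ã⁻¹`, so `wᵀ Ã = (1/N) 𝟙ᵀ`; this is
that identity read at coordinate `j`. -/
lemma vstar_balance (hp0 : ∀ E, 0 ≤ p (fun _ => 1) E) (hd : ∀ i, 0 < d0 p i) {u : ℝ}
    (hu0 : 0 < u) (hu1 : u ≤ 1) (j : Fin N) :
    (1 - u) * ∑ k, e0 p j k * vstar p u k - vstar p u j * d0 p j = -(1 / N) := by
  set M : Matrix (Fin N) (Fin N) ℝ := 1 - (1 - u) • Amat p
  have hM : IsUnit M.det := isUnit_det_one_sub_smul _ (fun i => (sum_abs_Amat hp0 hd i).le)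
    (abs_lt.mpr ⟨by linarith, by linarith⟩)
  set w : Fin N → ℝ := fun k => vstar p u k * d0 p k
  have hw : w = Matrix.vecMul (fun _ => (1 / N : ℝ)) M⁻¹ := by
    funext k
    simp only [w, M, vstar, muVec, Matrix.vecMul, dotProduct, ← mul_sum]
    field_simp [(hd k).ne', hu0.ne']
  have hbal : Matrix.vecMul w M j = 1 / N := by
    rw [hw, Matrix.vecMul_vecMul, Matrix.nonsing_inv_mul _ hM, Matrix.vecMul_one]
  have hbirth : ∀ k, w k * Amat p k j = e0 p j k * vstar p u k := fun k => by
    simp only [w, Amat, Matrix.of_apply]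
    field_simp [(hd k).ne']
  simp only [M, Matrix.vecMul, dotProduct, Matrix.sub_apply, Matrix.smul_apply, smul_eq_mul,
    mul_sub, sum_sub_distrib, Matrix.one_apply, mul_ite, mul_one, mul_zero, sum_ite_eq',
    mem_univ, if_true, mul_left_comm _ (1 - u), ← mul_sum, hbirth] at hbal
  linarith

end Neutral

section NeutralDrift

variable {N n : ℕ}

lemma Dhat_zero_eq (hn : n ≠ 0) (p : (Fin N → ℝ) → Event N → ℝ) (u : ℝ)
    (pay : Fin N → (Fin N → Fin n) → ℝ) (v : Fin N → ℝ) (y : Fin n) (x : Fin N → Fin n) :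
    Dhat N n p u pay v y 0 x =
      ∑ j, (if x j = y then 1 else 0) * ((1 - u) * ∑ k, e0 p j k * v k - v j * d0 p j) +
        u / n * ∑ k, v k * d0 p k := by
  have hbirths : ∑ j, (if x j = y then 1 else 0) * ((1 - u) * ∑ k, e0 p j k * v k) =
      ∑ k, ∑ j, v k * e0 p j k * ((1 - u) * if x j = y then 1 else 0) := by
    simp only [mul_sum]; rw [sum_comm]
    exact sum_congr rfl fun k _ => sum_congr rfl fun j _ => by ring
  rw [Dhat_eq_sum_indicatorDrift hn, fec_zero]
  simp only [mul_sub, sum_sub_distrib, hbirths]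
  simp only [indicatorDrift, d0, mul_sum, ← sum_add_distrib, ← sum_sub_distrib]
  exact sum_congr rfl fun k _ => sum_congr rfl fun j _ => by simp only [e0]; ring

lemma Dhat_zero_vstar (hn : n ≠ 0) {p : (Fin N → ℝ) → Event N → ℝ}
    (hp0 : ∀ E, 0 ≤ p (fun _ => 1) E) (hd : ∀ i, 0 < d0 p i) {u : ℝ} (hu0 : 0 < u) (hu1 : u ≤ 1)
    (pay : Fin N → (Fin N → Fin n) → ℝ) (y : Fin n) (x : Fin N → Fin n) :
    Dhat N n p u pay (vstar p u) y 0 x =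
      -(1 / N) * (∑ j, if x j = y then 1 else 0) + u / n * ∑ k, vstar p u k * d0 p k := by
  rw [Dhat_zero_eq hn]
  simp only [vstar_balance hp0 hd hu0 hu1, ← sum_mul]
  ring

end NeutralDrift

section Selection

variable {N n : ℕ} {p : (Fin N → ℝ) → Event N → ℝ}

lemma sum_mul_Dhat_sub_Dhat_zero (hn : n ≠ 0) {u : ℝ} {pay : Fin N → (Fin N → Fin n) → ℝ}
    (hp : ∀ δ x, ∑ E, p (fec pay δ x) E = 1) (hp0 : ∀ E, 0 ≤ p (fun _ => 1) E)
    (hd : ∀ i, 0 < d0 p i) (hu0 : 0 < u) (hu1 : u ≤ 1) {δ : ℝ} {π π₀ : (Fin N → Fin n) → ℝ}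
    (hπ : IsStationary (PdelGen N n p u pay δ) π) (hπ₀ : IsStationary (PdelGen N n p u pay 0) π₀)
    (y : Fin n) :
    ∑ x, π x * (Dhat N n p u pay (vstar p u) y δ x - Dhat N n p u pay (vstar p u) y 0 x) =
      1 / N * ∑ i, ((∑ x, π x * if x i = y then 1 else 0) -
        ∑ x, π₀ x * if x i = y then 1 else 0) := by
  have hmean : ∀ q : (Fin N → Fin n) → ℝ, IsDist q →
      ∑ x, q x * Dhat N n p u pay (vstar p u) y 0 x =
        -(1 / N) * ∑ i, (∑ x, q x * if x i = y then 1 else 0) +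
          u / n * ∑ k, vstar p u k * d0 p k := by
    intro q hq
    have hswap : ∑ x, q x * (-(1 / N) * ∑ j, if x j = y then 1 else 0) =
        -(1 / N) * ∑ i, ∑ x, q x * if x i = y then 1 else 0 := by
      simp only [mul_sum]
      rw [sum_comm]
      exact sum_congr rfl fun _ _ => sum_congr rfl fun _ _ => by ring
    simp only [Dhat_zero_vstar hn hp0 hd hu0 hu1, mul_add, sum_add_distrib]
    rw [hswap, ← sum_mul, hq.2, one_mul]
  have h0 := sum_mul_Dhat_eq_zero_of_isStationary hn (hp 0) hπ₀ (vstar p u) y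
  rw [hmean π₀ hπ₀.1] at h0
  simp only [mul_sub, sum_sub_distrib]
  rw [sum_mul_Dhat_eq_zero_of_isStationary hn (hp δ) hπ, hmean π hπ.1]
  linear_combination -h0

lemma differentiable_p_fec
    (hpdiff : ∀ (E : Event N) (F : Fin N → ℝ), (∀ i, 0 < F i) →
      DifferentiableAt ℝ (fun G => p G E) F)
    (pay : Fin N → (Fin N → Fin n) → ℝ) (x : Fin N → Fin n) (E : Event N) :
    Differentiable ℝ fun δ => p (fec pay δ x) E := fun δ =>
  DifferentiableAt.comp (g := fun G => p G E) δ (hpdiff E _ fun _ => Real.exp_pos _)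
    (by unfold fec; fun_prop)

lemma differentiable_Dhat
    (hpdiff : ∀ (E : Event N) (F : Fin N → ℝ), (∀ i, 0 < F i) →
      DifferentiableAt ℝ (fun G => p G E) F)
    (u : ℝ) (pay : Fin N → (Fin N → Fin n) → ℝ) (v : Fin N → ℝ) (y : Fin n)
    (x : Fin N → Fin n) :
    Differentiable ℝ fun δ => Dhat N n p u pay v y δ x := by
  have : ∀ i j, Differentiable ℝ fun δ => eRep p (fec pay δ x) i j := fun i j =>
    Differentiable.fun_sum fun E _ => differentiable_p_fec hpdiff pay x E
  unfold Dhat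
  fun_prop

lemma continuous_PdelGen
    (hpdiff : ∀ (E : Event N) (F : Fin N → ℝ), (∀ i, 0 < F i) →
      DifferentiableAt ℝ (fun G => p G E) F)
    (u : ℝ) (pay : Fin N → (Fin N → Fin n) → ℝ) (x x' : Fin N → Fin n) :
    Continuous fun δ => PdelGen N n p u pay δ x x' := by
  unfold PdelGen transMat
  exact continuous_finsetSum _ fun E _ =>
    ((differentiable_p_fec hpdiff pay x E).continuous.mul continuous_const).mul continuous_const

end Selection

lemma tendsto_slope_zero_right_deriv {f : ℝ → ℝ} (hf : DifferentiableAt ℝ f 0) :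
    Tendsto (fun t => t⁻¹ * (f t - f 0)) (𝓝[>] 0) (𝓝 (deriv f 0)) := by
  simpa using hf.hasDerivAt.tendsto_slope_zero_right

theorem stmt12_general (N n : ℕ) (hn : 1 ≤ n)
    (p : (Fin N → ℝ) → Event N → ℝ)
    (hpdist : ∀ F : Fin N → ℝ, (∀ i, 0 < F i) → IsDist (p F))
    (hpdiff : ∀ (E : Event N) (F : Fin N → ℝ), (∀ i, 0 < F i) →
      DifferentiableAt ℝ (fun G => p G E) F)
    (u : ℝ) (hu0 : 0 < u) (hu1 : u ≤ 1)
    (hd : ∀ i, 0 < d0 p i)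
    (pay : Fin N → (Fin N → Fin n) → ℝ)
    (π : ℝ → (Fin N → Fin n) → ℝ)
    (hstat : ∃ ε > (0:ℝ), ∀ δ : ℝ, 0 ≤ δ → δ < ε →
      IsStationary (PdelGen N n p u pay δ) (π δ) ∧
      ∀ π', IsStationary (PdelGen N n p u pay δ) π' → π' = π δ)
    (hdiff : ∀ (i : Fin N) (y : Fin n),
      DifferentiableAt ℝ (fun δ => ∑ x, π δ x * (if x i = y then (1:ℝ) else 0)) 0)
    (y : Fin n) :
    (1/(N:ℝ)) * ∑ i, deriv (fun δ => ∑ x, π δ x * (if x i = y then (1:ℝ) else 0)) 0 =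
      ∑ x, π 0 x * Dhat' N n p u pay (vstar p u) y x := by
  obtain ⟨ε, hε, hstat⟩ := hstat
  have hn0 : n ≠ 0 := Nat.one_le_iff_ne_zero.mp hn
  have hp : ∀ δ x, ∑ E, p (fec pay δ x) E = 1 := fun δ x => (hpdist _ fun _ => Real.exp_pos _).2
  have hp0 : ∀ E, 0 ≤ p (fun _ => 1) E := (hpdist _ fun _ => one_pos).1
  have hπ : Tendsto π (𝓝[>] 0) (𝓝 (π 0)) :=
    tendsto_of_isStationary
      (fun x x' => ((continuous_PdelGen hpdiff u pay x x').tendsto 0).mono_left nhdsWithin_le_nhds)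
      (mem_of_superset (Ioo_mem_nhdsGT hε) fun δ hδ => (hstat δ hδ.1.le hδ.2).1)
      (hstat 0 le_rfl hε).2
  refine tendsto_nhds_unique_of_eventuallyEq
    ((tendsto_finsetSum _ fun i _ => tendsto_slope_zero_right_deriv (hdiff i y)).const_mul _)
    (tendsto_finsetSum _ fun x _ => ((continuous_apply x).tendsto _ |>.comp hπ).mul
      (tendsto_slope_zero_right_deriv (differentiable_Dhat hpdiff u pay _ y x 0))) ?_
  filter_upwards [Ioo_mem_nhdsGT hε] with δ hδ
  simp only [Function.comp_apply, ← mul_sum, mul_left_comm _ δ⁻¹]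
  rw [sum_mul_Dhat_sub_Dhat_zero hn0 hp hp0 hd hu0 hu1 (hstat δ hδ.1.le hδ.2).1
    (hstat 0 le_rfl hε).1]

/-- with `v*` the mutation-weighted reproductive value vector,
`(1/N)·Σ_i d/dδ|₀ P_{π_δ}[X_i = y] = E_{π°}[Δ̂'_{v*,y}]`. -/
theorem stmt12 (N n : ℕ) (hN : 1 ≤ N) (hn : 1 ≤ n)
    (p : (Fin N → ℝ) → Event N → ℝ)
    (hpdist : ∀ F : Fin N → ℝ, (∀ i, 0 < F i) → IsDist (p F))
    (hpdiff : ∀ (E : Event N) (F : Fin N → ℝ), (∀ i, 0 < F i) →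
      DifferentiableAt ℝ (fun G => p G E) F)
    (hfix : FixationAxiom (p (fun _ => (1:ℝ))))
    (u : ℝ) (hu0 : 0 < u) (hu1 : u ≤ 1)
    (hd : ∀ i, 0 < d0 p i)
    (pay : Fin N → (Fin N → Fin n) → ℝ)
    (π : ℝ → (Fin N → Fin n) → ℝ)
    (hstat : ∃ ε > (0:ℝ), ∀ δ : ℝ, 0 ≤ δ → δ < ε →
      IsStationary (PdelGen N n p u pay δ) (π δ) ∧
      ∀ π', IsStationary (PdelGen N n p u pay δ) π' → π' = π δ)
    (hdiff : ∀ (i : Fin N) (y : Fin n),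
      DifferentiableAt ℝ (fun δ => ∑ x, π δ x * (if x i = y then (1:ℝ) else 0)) 0)
    (y : Fin n) :
    (1/(N:ℝ)) * ∑ i, deriv (fun δ => ∑ x, π δ x * (if x i = y then (1:ℝ) else 0)) 0 =
      ∑ x, π 0 x * Dhat' N n p u pay (vstar p u) y x :=
  stmt12_general N n hn p hpdist hpdiff u hu0 hu1 hd pay π hstat hdiff y

end SCT
end

section
/- Let A be a fixed N×N row-stochastic matrix and for u ∈ (0,1] define μ_i(u) := (1/N)·Σ_{j=1}^N u·((I − (1−u)A)^{−1})_{ji}. Then: (i) lim_{u→1⁻} μ_i(u) = 1/N for every i; and (ii) if A is irreducible, so that there is a unique probability vector z with z = zA (i.e., z_i = Σ_j z_j A_{ji}), then lim_{u→0⁺} μ_i(u) = z_i for every i. -/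
open Filter Matrix Topology

namespace Stmt16

variable {N : ℕ}

lemma mydet (A : Matrix (Fin N) (Fin N) ℝ)
    (hA0 : ∀ i j, 0 ≤ A i j) (hA1 : ∀ i, ∑ j, A i j = 1) {u : ℝ}
    (hu : u ∈ Set.Ioo (0:ℝ) 1) : IsUnit (1 - (1-u) • A).det := by
  rw [isUnit_iff_ne_zero]
  intro h0
  obtain ⟨v, hv, hmv⟩ := Matrix.exists_mulVec_eq_zero_iff.2 h0
  obtain ⟨i0, hi0⟩ : ∃ i, v i ≠ 0 := by
    by_contra h; push_neg at h; exact hv (funext h)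
  obtain ⟨i, -, hi⟩ := Finset.exists_max_image Finset.univ (fun j => |v j|)
    ⟨i0, Finset.mem_univ i0⟩
  have hvi : v = (1-u) • A.mulVec v := by
    have h : v - (1-u) • A.mulVec v = 0 := by
      simpa [Matrix.sub_mulVec, Matrix.one_mulVec, Matrix.smul_mulVec] using hmv
    exact sub_eq_zero.mp h
  have h2 : |A.mulVec v i| ≤ |v i| := by
    have hmv' : A.mulVec v i = ∑ j, A i j * v j := by
      simp [Matrix.mulVec, dotProduct]
    rw [hmv']
    calc |∑ j, A i j * v j| ≤ ∑ j, |A i j * v j| := Finset.abs_sum_le_sum_abs _ _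
      _ = ∑ j, A i j * |v j| := by
          refine Finset.sum_congr rfl fun j _ => ?_
          rw [abs_mul, abs_of_nonneg (hA0 i j)]
      _ ≤ ∑ j, A i j * |v i| := by
          refine Finset.sum_le_sum fun j _ => ?_
          exact mul_le_mul_of_nonneg_left (hi j (Finset.mem_univ j)) (hA0 i j)
      _ = |v i| := by rw [← Finset.sum_mul, hA1 i, one_mul]
  have hb : |v i| ≤ (1-u) * |v i| := by
    have hvieq : v i = (1-u) * A.mulVec v i := by
      conv_lhs => rw [hvi]
      simp
    calc |v i| = |1-u| * |A.mulVec v i| := by rw [hvieq, abs_mul]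
      _ = (1-u) * |A.mulVec v i| := by rw [abs_of_pos (by linarith [hu.2])]
      _ ≤ (1-u) * |v i| := mul_le_mul_of_nonneg_left h2 (by linarith [hu.2])
  have hpos : 0 < |v i| := lt_of_lt_of_le (abs_pos.mpr hi0) (hi i0 (Finset.mem_univ i0))
  nlinarith [hu.1]

lemma inv_entry_nonneg (A : Matrix (Fin N) (Fin N) ℝ)
    (hA0 : ∀ i j, 0 ≤ A i j) (hA1 : ∀ i, ∑ j, A i j = 1) {u : ℝ}
    (hu : u ∈ Set.Ioo (0:ℝ) 1) (k i : Fin N) : 0 ≤ (1 - (1-u) • A)⁻¹ k i := by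
  set B : Matrix (Fin N) (Fin N) ℝ := (1 - (1-u) • A)⁻¹ with hBdef
  have hMB : (1 - (1-u) • A) * B = 1 := Matrix.mul_nonsing_inv _ (mydet A hA0 hA1 hu)
  obtain ⟨m, -, hm⟩ := Finset.exists_min_image Finset.univ (fun j => B j i)
    ⟨k, Finset.mem_univ k⟩
  have he : ∑ l, (1 - (1-u) • A) m l * B l i = (1 : Matrix (Fin N) (Fin N) ℝ) m i := by
    have h := congrArg (fun C => C m i) hMB
    simpa [Matrix.mul_apply] using h
  have hterm : ∀ l, (1 - (1-u) • A) m l * B l i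
      = (if m = l then B l i else 0) - (1-u) * (A m l * B l i) := by
    intro l
    by_cases hml : m = l <;>
      simp [Matrix.sub_apply, Matrix.one_apply, Matrix.smul_apply, hml] <;> ring
  have he2 : B m i - (1-u) * ∑ l, A m l * B l i = (1 : Matrix (Fin N) (Fin N) ℝ) m i := by
    rw [← he, Finset.sum_congr rfl fun l _ => hterm l, Finset.sum_sub_distrib,
      Finset.sum_ite_eq, ← Finset.mul_sum]
    simp
  have hone : (0:ℝ) ≤ (1 : Matrix (Fin N) (Fin N) ℝ) m i := by
    rw [Matrix.one_apply]; split <;> norm_num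
  have hsum : ∑ l, A m l * B m i ≤ ∑ l, A m l * B l i := by
    refine Finset.sum_le_sum fun l _ => ?_
    exact mul_le_mul_of_nonneg_left (hm l (Finset.mem_univ l)) (hA0 m l)
  have hsum2 : ∑ l, A m l * B m i = B m i := by
    rw [← Finset.sum_mul, hA1 m, one_mul]
  have hBm : 0 ≤ B m i := by nlinarith [hu.1, hu.2]
  exact le_trans hBm (hm k (Finset.mem_univ k))

lemma colsum (A : Matrix (Fin N) (Fin N) ℝ)
    (hA0 : ∀ i j, 0 ≤ A i j) (hA1 : ∀ i, ∑ j, A i j = 1) {u : ℝ}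
    (hu : u ∈ Set.Ioo (0:ℝ) 1) (i : Fin N) :
    (∑ k, (1 - (1-u) • A)⁻¹ k i)
      - (1-u) * ∑ j, (∑ k, (1 - (1-u) • A)⁻¹ k j) * A j i = 1 := by
  set B : Matrix (Fin N) (Fin N) ℝ := (1 - (1-u) • A)⁻¹ with hBdef
  have hBM : B * (1 - (1-u) • A) = 1 := Matrix.nonsing_inv_mul _ (mydet A hA0 hA1 hu)
  have h1 : ∑ k, ∑ j, B k j * (1 - (1-u) • A) j i = 1 := by
    have h := congrArg (fun C => ∑ k, C k i) hBM
    simpa [Matrix.mul_apply, Matrix.one_apply, Finset.sum_ite_eq', Finset.mem_univ] using h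
  rw [Finset.sum_comm] at h1
  have hterm : ∀ j, (∑ k, B k j) * ((1 - (1-u) • A) j i)
      = (if j = i then (∑ k, B k j) else 0) - (1-u) * ((∑ k, B k j) * A j i) := by
    intro j
    by_cases hji : j = i <;>
      simp [Matrix.sub_apply, Matrix.one_apply, Matrix.smul_apply, hji] <;> ring
  calc (∑ k, B k i) - (1-u) * ∑ j, (∑ k, B k j) * A j i
      = ∑ j, (∑ k, B k j) * ((1 - (1-u) • A) j i) := by
        rw [Finset.sum_congr rfl fun j _ => hterm j, Finset.sum_sub_distrib,
          Finset.sum_ite_eq', ← Finset.mul_sum]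
        simp
    _ = ∑ j, ∑ k, B k j * ((1 - (1-u) • A) j i) :=
        Finset.sum_congr rfl fun j _ => Finset.sum_mul ..
    _ = 1 := h1

lemma rowsum (A : Matrix (Fin N) (Fin N) ℝ)
    (hA0 : ∀ i j, 0 ≤ A i j) (hA1 : ∀ i, ∑ j, A i j = 1) {u : ℝ}
    (hu : u ∈ Set.Ioo (0:ℝ) 1) (k : Fin N) :
    u * ∑ i, (1 - (1-u) • A)⁻¹ k i = 1 := by
  set B : Matrix (Fin N) (Fin N) ℝ := (1 - (1-u) • A)⁻¹ with hBdef
  have hBM : B * (1 - (1-u) • A) = 1 := Matrix.nonsing_inv_mul _ (mydet A hA0 hA1 hu)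
  have hMrow : ∀ j, ∑ i', (1 - (1-u) • A) j i' = u := by
    intro j
    have h : ∀ i', (1 - (1-u) • A) j i' = (if j = i' then (1:ℝ) else 0) - (1-u) * A j i' := by
      intro i'
      simp [Matrix.sub_apply, Matrix.one_apply, Matrix.smul_apply]
    rw [Finset.sum_congr rfl fun i' _ => h i', Finset.sum_sub_distrib, ← Finset.mul_sum, hA1 j]
    simp only [Finset.sum_ite_eq, Finset.mem_univ, if_true, mul_one]
    ring
  have h1 : ∑ i', ∑ j, B k j * (1 - (1-u) • A) j i' = 1 := by
    have h := congrArg (fun C => ∑ i', C k i') hBM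
    simpa [Matrix.mul_apply, Matrix.one_apply, Finset.sum_ite_eq, Finset.mem_univ] using h
  rw [Finset.sum_comm] at h1
  have h2 : ∀ j, ∑ i', B k j * ((1 - (1-u) • A) j i') = B k j * u := by
    intro j; rw [← Finset.mul_sum, hMrow j]
  rw [Finset.sum_congr rfl fun j _ => h2 j] at h1
  rw [Finset.mul_sum, ← h1]
  exact Finset.sum_congr rfl fun j _ => mul_comm _ _

noncomputable def gfun (N : ℕ) (A : Matrix (Fin N) (Fin N) ℝ) (u : ℝ) (i : Fin N) : ℝ :=
  (1/(N:ℝ)) * ∑ j, u * (((1 - (1-u) • A)⁻¹) j i)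

lemma gfun_sum (hN : 1 ≤ N) (A : Matrix (Fin N) (Fin N) ℝ)
    (hA0 : ∀ i j, 0 ≤ A i j) (hA1 : ∀ i, ∑ j, A i j = 1) {u : ℝ}
    (hu : u ∈ Set.Ioo (0:ℝ) 1) :
    ∑ i, gfun N A u i = 1 := by
  have hNne : (N:ℝ) ≠ 0 := Nat.cast_ne_zero.mpr (by omega)
  unfold gfun
  set B : Matrix (Fin N) (Fin N) ℝ := (1 - (1-u) • A)⁻¹ with hBdef
  calc ∑ i, (1/(N:ℝ)) * ∑ j, u * B j i
      = (1/(N:ℝ)) * ∑ i, ∑ j, u * B j i := by rw [Finset.mul_sum]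
    _ = (1/(N:ℝ)) * ∑ j, ∑ i, u * B j i := by rw [Finset.sum_comm]
    _ = (1/(N:ℝ)) * ∑ _j : Fin N, (1:ℝ) := by
        congr 1
        refine Finset.sum_congr rfl fun j _ => ?_
        rw [← Finset.mul_sum]
        exact rowsum A hA0 hA1 hu j
    _ = 1 := by
        rw [Finset.sum_const]
        simp [hNne]

lemma gfun_nonneg (A : Matrix (Fin N) (Fin N) ℝ)
    (hA0 : ∀ i j, 0 ≤ A i j) (hA1 : ∀ i, ∑ j, A i j = 1) {u : ℝ}
    (hu : u ∈ Set.Ioo (0:ℝ) 1) (i : Fin N) : 0 ≤ gfun N A u i :=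
  mul_nonneg (by positivity)
    (Finset.sum_nonneg fun j _ => mul_nonneg hu.1.le (inv_entry_nonneg A hA0 hA1 hu j i))

lemma gfun_le_one (hN : 1 ≤ N) (A : Matrix (Fin N) (Fin N) ℝ)
    (hA0 : ∀ i j, 0 ≤ A i j) (hA1 : ∀ i, ∑ j, A i j = 1) {u : ℝ}
    (hu : u ∈ Set.Ioo (0:ℝ) 1) (i : Fin N) : gfun N A u i ≤ 1 := by
  have hsum := gfun_sum hN A hA0 hA1 hu
  have h := Finset.single_le_sum (f := fun i' => gfun N A u i')
    (fun i' _ => gfun_nonneg A hA0 hA1 hu i') (Finset.mem_univ i)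
  rwa [hsum] at h

lemma gfun_eq (hN : 1 ≤ N) (A : Matrix (Fin N) (Fin N) ℝ)
    (hA0 : ∀ i j, 0 ≤ A i j) (hA1 : ∀ i, ∑ j, A i j = 1) {u : ℝ}
    (hu : u ∈ Set.Ioo (0:ℝ) 1) (i : Fin N) :
    gfun N A u i = (1-u) * (∑ j, gfun N A u j * A j i) + u/(N:ℝ) := by
  have hNne : (N:ℝ) ≠ 0 := Nat.cast_ne_zero.mpr (by omega)
  unfold gfun
  set B : Matrix (Fin N) (Fin N) ℝ := (1 - (1-u) • A)⁻¹ with hBdef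
  have hs := colsum A hA0 hA1 hu i
  rw [← hBdef] at hs
  have hL : ∑ j, u * B j i = u * ∑ j, B j i := (Finset.mul_sum ..).symm
  have hR : ∑ j, ((1/(N:ℝ)) * ∑ k, u * B k j) * A j i
      = (u/(N:ℝ)) * ∑ j, (∑ k, B k j) * A j i := by
    rw [Finset.mul_sum]
    refine Finset.sum_congr rfl fun j _ => ?_
    rw [← Finset.mul_sum]
    ring
  rw [hL, hR]
  linear_combination (u/(N:ℝ)) * hs

lemma part2 (hN : 1 ≤ N) (A : Matrix (Fin N) (Fin N) ℝ)
    (hA0 : ∀ i j, 0 ≤ A i j) (hA1 : ∀ i, ∑ j, A i j = 1)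
    (z : Fin N → ℝ)
    (hzuniq : ∀ z' : Fin N → ℝ, (∀ i, 0 ≤ z' i) → (∑ i, z' i = 1) →
      (∀ i, z' i = ∑ j, z' j * A j i) → z' = z) :
    Tendsto (gfun N A) (nhdsWithin 0 (Set.Ioo (0:ℝ) 1)) (nhds z) := by
  rw [tendsto_iff_ultrafilter]
  intro U hU
  have hmem : ∀ᶠ u in (U : Filter ℝ), u ∈ Set.Ioo (0:ℝ) 1 := hU self_mem_nhdsWithin
  have hu0 : Tendsto (fun u : ℝ => u) (U : Filter ℝ) (𝓝 0) :=
    tendsto_id.mono_right (le_trans hU nhdsWithin_le_nhds)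
  set K : Set (Fin N → ℝ) := Set.univ.pi fun _ => Set.Icc (0:ℝ) 1 with hKdef
  have hKc : IsCompact K := isCompact_univ_pi fun _ => isCompact_Icc
  have hgK : ∀ᶠ u in (U : Filter ℝ), gfun N A u ∈ K := by
    filter_upwards [hmem] with u hu
    exact Set.mem_pi.mpr fun i _ =>
      ⟨gfun_nonneg A hA0 hA1 hu i, gfun_le_one hN A hA0 hA1 hu i⟩
  have hle : (Ultrafilter.map (gfun N A) U : Filter (Fin N → ℝ)) ≤ Filter.principal K := by
    rw [Ultrafilter.coe_map, Filter.le_principal_iff, Filter.mem_map]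
    exact hgK
  obtain ⟨w, hwK, hw⟩ := hKc.ultrafilter_le_nhds (Ultrafilter.map (gfun N A) U) hle
  have hgw : Tendsto (gfun N A) (U : Filter ℝ) (𝓝 w) := by
    rwa [Ultrafilter.coe_map] at hw
  have hgwi : ∀ i, Tendsto (fun u => gfun N A u i) (U : Filter ℝ) (𝓝 (w i)) :=
    fun i => ((continuous_apply i).tendsto w).comp hgw
  have hw0 : ∀ i, 0 ≤ w i := fun i => (Set.mem_pi.mp hwK i (Set.mem_univ i)).1
  have hwsum : ∑ i, w i = 1 := by
    have h1 : Tendsto (fun u => ∑ i, gfun N A u i) (U : Filter ℝ) (𝓝 (∑ i, w i)) :=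
      tendsto_finset_sum _ fun i _ => hgwi i
    have h2 : Tendsto (fun _ : ℝ => (1:ℝ)) (U : Filter ℝ) (𝓝 (∑ i, w i)) :=
      Tendsto.congr' (hmem.mono fun u hu => gfun_sum hN A hA0 hA1 hu) h1
    exact tendsto_nhds_unique h2 tendsto_const_nhds
  have hwst : ∀ i, w i = ∑ j, w j * A j i := by
    intro i
    have h1 : Tendsto (fun u : ℝ => (1-u) * (∑ j, gfun N A u j * A j i) + u/(N:ℝ))
        (U : Filter ℝ) (𝓝 ((1-0) * (∑ j, w j * A j i) + 0/(N:ℝ))) := by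
      apply Tendsto.add
      · exact (tendsto_const_nhds.sub hu0).mul
          (tendsto_finset_sum _ fun j _ => (hgwi j).mul_const (A j i))
      · exact hu0.div_const _
    have h1' : Tendsto (fun u : ℝ => (1-u) * (∑ j, gfun N A u j * A j i) + u/(N:ℝ))
        (U : Filter ℝ) (𝓝 (∑ j, w j * A j i)) := by
      simpa using h1
    have h2 : Tendsto (fun u => gfun N A u i) (U : Filter ℝ) (𝓝 (∑ j, w j * A j i)) :=
      Tendsto.congr' (hmem.mono fun u hu => (gfun_eq hN A hA0 hA1 hu i).symm) h1'
    exact tendsto_nhds_unique (hgwi i) h2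
  have hwz : w = z := hzuniq w hw0 hwsum hwst
  rwa [hwz] at hgw

end Stmt16

open Stmt16 in
/-- limits of `μ_i(u) := (1/N)·Σ_j u·((I−(1−u)A)⁻¹)_{ji}` as
`u → 1⁻` (uniform limit `1/N`) and, for irreducible `A`, as `u → 0⁺`
(the unique stationary vector `z` of the ancestral walk). -/
theorem stmt16 (N : ℕ) (hN : 1 ≤ N)
    (A : Matrix (Fin N) (Fin N) ℝ)
    (hA0 : ∀ i j, 0 ≤ A i j) (hA1 : ∀ i, ∑ j, A i j = 1) :
    (∀ i, Tendsto
        (fun u : ℝ => (1/(N:ℝ)) * ∑ j, u * (((1 - (1-u) • A)⁻¹) j i))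
        (nhdsWithin 1 (Set.Ioo (0:ℝ) 1)) (nhds (1/(N:ℝ)))) ∧
    ((∀ i j, ∃ t : ℕ, 0 < (A^t) i j) →
      ∀ z : Fin N → ℝ,
        (∀ i, 0 ≤ z i) → (∑ i, z i = 1) → (∀ i, z i = ∑ j, z j * A j i) →
        (∀ z' : Fin N → ℝ, (∀ i, 0 ≤ z' i) → (∑ i, z' i = 1) →
          (∀ i, z' i = ∑ j, z' j * A j i) → z' = z) →
        ∀ i, Tendsto
          (fun u : ℝ => (1/(N:ℝ)) * ∑ j, u * (((1 - (1-u) • A)⁻¹) j i))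
          (nhdsWithin 0 (Set.Ioo (0:ℝ) 1)) (nhds (z i))) := by
  constructor
  · intro i
    have hF : Continuous (fun u : ℝ => 1 - (1-u) • A) :=
      continuous_const.sub ((continuous_const.sub continuous_id).smul continuous_const)
    have hdet : Continuous fun u : ℝ => (1 - (1-u) • A).det := hF.matrix_det
    have hadj : Continuous fun u : ℝ => (1 - (1-u) • A).adjugate := hF.matrix_adjugate
    have hF1 : (1 - (1-(1:ℝ)) • A) = (1 : Matrix (Fin N) (Fin N) ℝ) := by simp
    have hdet1 : (1 - (1-(1:ℝ)) • A).det = 1 := by rw [hF1, Matrix.det_one]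
    have hdinv : Tendsto (fun u : ℝ => ((1 - (1-u) • A).det)⁻¹) (nhds 1) (nhds 1) := by
      have h := (hdet.tendsto 1).inv₀ (by rw [hdet1]; norm_num)
      rwa [hdet1, inv_one] at h
    have hmain : Tendsto
        (fun u : ℝ => (1/(N:ℝ)) * ∑ j, u * (((1 - (1-u) • A).det)⁻¹ * (1 - (1-u) • A).adjugate j i))
        (nhds 1)
        (nhds ((1/(N:ℝ)) * ∑ j, (1:ℝ) * ((1:ℝ) * (1 - (1-(1:ℝ)) • A).adjugate j i))) := by
      apply Tendsto.const_mul
      apply tendsto_finset_sum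
      intro j _
      exact tendsto_id.mul (hdinv.mul
        (((continuous_apply i).comp ((continuous_apply j).comp hadj)).tendsto 1))
    have hval : (1/(N:ℝ)) * ∑ j, (1:ℝ) * ((1:ℝ) * (1 - (1-(1:ℝ)) • A).adjugate j i) = 1/(N:ℝ) := by
      rw [hF1, Matrix.adjugate_one]
      simp [Matrix.one_apply, Finset.sum_ite_eq']
    rw [hval] at hmain
    have hcongr : ∀ u : ℝ, (1/(N:ℝ)) * ∑ j, u * (((1 - (1-u) • A)⁻¹) j i)
        = (1/(N:ℝ)) * ∑ j, u * (((1 - (1-u) • A).det)⁻¹ * (1 - (1-u) • A).adjugate j i) := by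
      intro u
      congr 1
      refine Finset.sum_congr rfl fun j _ => ?_
      rw [Matrix.inv_def]
      simp [Matrix.smul_apply, Ring.inverse_eq_inv, smul_eq_mul]
    exact ((hmain.mono_left nhdsWithin_le_nhds).congr fun u => (hcongr u).symm)
  · intro _hirr z hz0 hz1 hzst hzuniq i
    exact ((continuous_apply i).tendsto z).comp (part2 hN A hA0 hA1 z hzuniq)
end
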